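/- arXiv:2211.14229 — 2 statements merged into one kernel-verified Lean document; each statement's English description precedes it below -/
import Mathlib

section
/- Let k ≥ 0, let y satisfy 2^k ≤ y < 2^{k+1}, and let ℓ > k. Define L, S : {0,…,2^k−1}² → {0,1,2} by L(x,z) = culam[y](x, 2^k+z) and S(x,z) = culam[y](2^k+x, 2^k+z). Then for all x,z with 0 ≤ x,z < 2^{ℓ+1}, writing x' = ⌊x/2^k⌋, z' = ⌊z/2^k⌋, x'' = x mod 2^k, z'' = z mod 2^k, one has culam[2^ℓ+y](x,z) = min(2, culam[2^{ℓ−k}](x',z')·S(x'',z'') + culam[2^{ℓ−k}+1](x',z')·L(x'',z'')). -/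
/-- Fuel-indexed Ulam predicate: a binary word (as a `List Bool`) of length 1 is Ulam,
and a longer word is Ulam iff it is expressible *uniquely* as a concatenation of two
distinct (nonempty) Ulam words. The fuel strictly exceeds the lengths needed. -/
def ulamAux : ℕ → List Bool → Prop
  | 0, _ => False
  | n + 1, w =>
    if w.length = 1 then True
    else ∃! p : List Bool × List Bool,
      p.1 ≠ [] ∧ p.2 ≠ [] ∧ p.1 ≠ p.2 ∧ w = p.1 ++ p.2 ∧
        ulamAux n p.1 ∧ ulamAux n p.2

/-- A binary word is an Ulam word. -/
def IsUlam (w : List Bool) : Prop := ulamAux w.length w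

/-- The word `0^x 1 0^y`. -/
def wordTwo (x y : ℕ) : List Bool :=
  List.replicate x false ++ [true] ++ List.replicate y false

/-- The word `0^x 1 0^y 1 0^z`. -/
def wordThree (x y z : ℕ) : List Bool :=
  List.replicate x false ++ [true] ++ List.replicate y false ++ [true] ++
    List.replicate z false

/-- `UlamSet y` is the set of pairs `(x,z)` such that `0^x 1 0^y 1 0^z` is Ulam. -/
def UlamSet (y : ℕ) : Set (ℕ × ℕ) := {p | IsUlam (wordThree p.1 y p.2)}

/-- `culam y x z = min(2, N)` where `N` counts `0 ≤ a ≤ y` with both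
`w(x,a)` and `w(y-a,z)` Ulam. -/
noncomputable def culam (y x z : ℕ) : ℕ :=
  min 2 {a : ℕ | a ≤ y ∧ IsUlam (wordTwo x a) ∧ IsUlam (wordTwo (y - a) z)}.ncard

/-- A positive integer is Zumkeller if its binary representation has at most one `0`. -/
def IsZumkeller (y : ℕ) : Prop := 0 < y ∧ (Nat.bits y).count false ≤ 1

/-- The largest `e ≤ d - 1` with `x mod 2^(e+1) < 2^e` and `z mod 2^(e+1) < 2^e`
(and `0` if none exists). -/
def eIdx (d x z : ℕ) : ℕ :=
  Nat.findGreatest (fun e => x % 2 ^ (e + 1) < 2 ^ e ∧ z % 2 ^ (e + 1) < 2 ^ e) (d - 1)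

/-- The universal pattern `E1[d]` on `B_d`. -/
def E1 (d x z : ℕ) : ℕ :=
  if 2 ^ d - 1 ≤ x + z then 0
  else if x % 2 ^ eIdx d x z + z % 2 ^ eIdx d x z < 2 ^ eIdx d x z - 1 then 2 else 1

/-- The universal pattern `E2[d]` on `B_d` (constant `1`). -/
def E2 (_d _x _z : ℕ) : ℕ := 1

/-- The universal pattern `O1[d]` on `B_d`. -/
def O1 (d x z : ℕ) : ℕ :=
  if 2 ^ d - 2 ≤ x + z then 0
  else if (x + z) % 2 = 0 then (if x % 2 = 1 then 0 else 2)
  else if x % 2 ^ eIdx d x z + z % 2 ^ eIdx d x z < 2 ^ eIdx d x z - 1 then 2 else 1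

/-- The universal pattern `O2[d]` on `B_d` (independent of `d`). -/
def O2 (_d x z : ℕ) : ℕ :=
  if (x + z) % 2 = 0 then (if x % 2 = 1 then 0 else 2) else 1

section UlamAux

theorem landBit (A B r0 s0 : ℕ) (hr : r0 < 2) (hs : s0 < 2) :
    (2*A + r0) &&& (2*B + s0) = 2*(A &&& B) + (r0 &&& s0) := by
  have h : ∀ (a b : Bool), (2*A + a.toNat) &&& (2*B + b.toNat) =
      2*(A &&& B) + (a && b).toNat := by
    intro a b
    have := Nat.land_bit a A b B
    simpa [Nat.bit_val, mul_comm] using this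
  interval_cases r0 <;> interval_cases s0 <;>
    [simpa using h false false; simpa using h false true;
     simpa using h true false; simpa using h true true]

theorem landSplit (k : ℕ) : ∀ q r p s : ℕ, r < 2^k → s < 2^k →
    (2^k*q + r) &&& (2^k*p + s) = 2^k*(q &&& p) + (r &&& s) := by
  induction k with
  | zero => intro q r p s hr hs
            interval_cases r; interval_cases s; simp
  | succ k ih =>
    intro q r p s hr hs
    have e : ∀ m : ℕ, (2:ℕ)^(k+1) * m = 2*(2^k*m) := by
      intro m; rw [pow_succ]; ring
    have h5 : r &&& s = 2*(r/2 &&& s/2) + (r%2 &&& s%2) := by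
      conv_lhs => rw [← Nat.div_add_mod r 2, ← Nat.div_add_mod s 2]
      rw [landBit _ _ _ _ (Nat.mod_lt _ two_pos) (Nat.mod_lt _ two_pos)]
    rw [e, e, e,
      show 2*(2^k*q) + r = 2*(2^k*q + r/2) + r%2 by omega,
      show 2*(2^k*p) + s = 2*(2^k*p + s/2) + s%2 by omega,
      landBit _ _ _ _ (Nat.mod_lt _ two_pos) (Nat.mod_lt _ two_pos),
      ih q (r/2) p (s/2) (by omega) (by omega), h5]
    omega

theorem landSub {a' a x : ℕ} (h : a' &&& a = a') (hx : a &&& x = 0) : a' &&& x = 0 := by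
  rw [← h, Nat.land_assoc, hx]; simp

theorem landLowSub (k q r : ℕ) (hr : r < 2^k) : r &&& (2^k*q + r) = r := by
  have := landSplit k 0 r q r hr hr
  simpa using this

theorem landModSub (a k : ℕ) : (a % 2^k) &&& a = a % 2^k := by
  have hp : 0 < (2:ℕ)^k := Nat.pow_pos two_pos
  nth_rewrite 2 [show a = 2^k*(a/2^k) + a % 2^k from (Nat.div_add_mod a (2^k)).symm]
  exact landLowSub k _ _ (Nat.mod_lt _ hp)

theorem landTrans {a b c : ℕ} (h1 : a &&& b = a) (h2 : b &&& c = b) : a &&& c = a := by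
  conv_lhs => rw [← h1, Nat.land_assoc, h2]
  exact h1

theorem subSub (k : ℕ) : ∀ a b : ℕ, a < 2^k → b < 2^k → 2^k ≤ a + b →
    ∃ a' b', a' &&& a = a' ∧ b' &&& b = b' ∧ a' + b' = a + b - 2^k := by
  induction k with
  | zero => intro a b ha hb hab; omega
  | succ k ih =>
    intro a b ha hb hab
    have e : (2:ℕ)^(k+1) = 2^k + 2^k := by rw [pow_succ]; ring
    have hma : a % 2^k &&& a = a % 2^k := landModSub a k
    have hmb : b % 2^k &&& b = b % 2^k := landModSub b k
    rcases le_or_gt (2^k) a with h1 | h1 <;> rcases le_or_gt (2^k) b with h2 | h2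
    · have ea : a % 2^k = a - 2^k := by
        rw [Nat.mod_eq_sub_mod h1, Nat.mod_eq_of_lt (by omega)]
      have eb : b % 2^k = b - 2^k := by
        rw [Nat.mod_eq_sub_mod h2, Nat.mod_eq_of_lt (by omega)]
      exact ⟨a % 2^k, b % 2^k, hma, hmb, by omega⟩
    · have ea : a % 2^k = a - 2^k := by
        rw [Nat.mod_eq_sub_mod h1, Nat.mod_eq_of_lt (by omega)]
      obtain ⟨a', b', h3, h4, h5⟩ := ih (a % 2^k) b (by omega) h2 (by omega)
      exact ⟨a', b', landTrans h3 hma, h4, by omega⟩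
    · have eb : b % 2^k = b - 2^k := by
        rw [Nat.mod_eq_sub_mod h2, Nat.mod_eq_of_lt (by omega)]
      obtain ⟨a', b', h3, h4, h5⟩ := ih a (b % 2^k) h1 (by omega) (by omega)
      exact ⟨a', b', h3, landTrans h4 hmb, by omega⟩
    · omega

theorem l00 (u v : ℕ) : 2*u &&& 2*v = 2*(u&&&v) := by
  simpa using landBit u v 0 0 (by norm_num) (by norm_num)

theorem l01 (u v : ℕ) : 2*u &&& (2*v+1) = 2*(u&&&v) := by
  simpa using landBit u v 0 1 (by norm_num) (by norm_num)

theorem l10 (u v : ℕ) : (2*u+1) &&& 2*v = 2*(u&&&v) := by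
  simpa using landBit u v 1 0 (by norm_num) (by norm_num)

theorem l11 (u v : ℕ) : (2*u+1) &&& (2*v+1) = 2*(u&&&v)+1 := by
  simpa using landBit u v 1 1 (by norm_num) (by norm_num)

theorem lemX : ∀ n x a : ℕ, x + a = n → 0 < n →
    (x &&& a = 0 ↔ Xor' (0 < x ∧ (x-1) &&& a = 0) (0 < a ∧ x &&& (a-1) = 0)) := by
  intro n
  induction n using Nat.strong_induction_on with
  | _ n IH =>
    intro x a hn hpos
    obtain ⟨u, hu | hu⟩ := Nat.even_or_odd' x <;>
      obtain ⟨v, hv | hv⟩ := Nat.even_or_odd' a <;> subst hu hv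
    · -- x = 2u, a = 2v
      have hP : (0 < 2*u ∧ (2*u-1) &&& (2*v) = 0) ↔ (0 < u ∧ (u-1) &&& v = 0) := by
        rcases Nat.eq_zero_or_pos u with rfl | hu0
        · simp
        · have : 2*u-1 = 2*(u-1)+1 := by omega
          rw [this, l10]
          constructor <;> rintro ⟨-, h⟩ <;> exact ⟨by omega, by omega⟩
      have hQ : (0 < 2*v ∧ (2*u) &&& (2*v-1) = 0) ↔ (0 < v ∧ u &&& (v-1) = 0) := by
        rcases Nat.eq_zero_or_pos v with rfl | hv0
        · simp
        · have : 2*v-1 = 2*(v-1)+1 := by omega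
          rw [this, l01]
          constructor <;> rintro ⟨-, h⟩ <;> exact ⟨by omega, by omega⟩
      rw [l00]
      have IH' := IH (u+v) (by omega) u v rfl (by omega)
      simp only [Xor'] at IH' ⊢
      rw [hP, hQ]
      constructor
      · intro h; exact IH'.mp (by omega)
      · intro h; have := IH'.mpr h; omega
    · -- x = 2u, a = 2v+1
      have hP : ¬ (0 < 2*u ∧ (2*u-1) &&& (2*v+1) = 0) := by
        rintro ⟨h0, h⟩
        have : 2*u-1 = 2*(u-1)+1 := by omega
        rw [this, l11] at h
        omega
      have hQ : (2*u) &&& (2*v+1-1) = 2*(u &&& v) := by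
        rw [show 2*v+1-1 = 2*v by omega, l00]
      rw [l01]
      simp only [Xor']
      rw [hQ]
      constructor
      · intro h; right; exact ⟨⟨by omega, by omega⟩, hP⟩
      · rintro (⟨hp,-⟩|⟨⟨-,h2⟩,-⟩)
        · exact absurd hp hP
        · omega
    · -- x = 2u+1, a = 2v
      have hQ : ¬ (0 < 2*v ∧ (2*u+1) &&& (2*v-1) = 0) := by
        rintro ⟨h0, h⟩
        have : 2*v-1 = 2*(v-1)+1 := by omega
        rw [this, l11] at h
        omega
      have hP : (2*u+1-1) &&& (2*v) = 2*(u &&& v) := by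
        rw [show 2*u+1-1 = 2*u by omega, l00]
      rw [l10]
      simp only [Xor']
      rw [hP]
      constructor
      · intro h; left; exact ⟨⟨by omega, by omega⟩, hQ⟩
      · rintro (⟨⟨-,h2⟩,-⟩|⟨hq,-⟩)
        · omega
        · exact absurd hq hQ
    · -- x = 2u+1, a = 2v+1
      have hP : (2*u+1-1) &&& (2*v+1) = 2*(u&&&v) := by
        rw [show 2*u+1-1 = 2*u by omega, l01]
      have hQ : (2*u+1) &&& (2*v+1-1) = 2*(u&&&v) := by
        rw [show 2*v+1-1 = 2*v by omega, l10]
      rw [l11]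
      simp only [Xor', hP, hQ]
      unfold Xor at *
      omega

theorem landZeroIff (k q r p s : ℕ) (hr : r < 2^k) (hs : s < 2^k) :
    (2^k*q + r) &&& (2^k*p + s) = 0 ↔ (q &&& p = 0 ∧ r &&& s = 0) := by
  rw [landSplit k q r p s hr hs]
  have : 0 < (2:ℕ)^k := Nat.pow_pos two_pos
  constructor
  · intro h
    have h1 : 2^k*(q &&& p) = 0 := by omega
    have h2 : q &&& p = 0 := by
      rcases Nat.mul_eq_zero.mp h1 with h | h
      · omega
      · exact h
    exact ⟨h2, by omega⟩
  · rintro ⟨h1, h2⟩; rw [h1, h2]; simp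

def C (y x z : ℕ) : ℕ :=
  ((Finset.range (y+1)).filter (fun a => x &&& a = 0 ∧ (y - a) &&& z = 0)).card

theorem C_mem {y x z a : ℕ} :
    a ∈ (Finset.range (y+1)).filter (fun a => x &&& a = 0 ∧ (y - a) &&& z = 0) ↔
    (a ≤ y ∧ x &&& a = 0 ∧ (y - a) &&& z = 0) := by
  simp [Finset.mem_filter, Finset.mem_range, Nat.lt_succ_iff]

theorem Csplit (k Y X Z yL xL zL : ℕ) (hY : 1 ≤ Y) (hy : yL < 2^k)
    (hx : xL < 2^k) (hz : zL < 2^k) :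
    C (2^k*Y + yL) (2^k*X + xL) (2^k*Z + zL) =
      C Y X Z * C yL xL zL + C (Y-1) X Z * C (2^k + yL) (2^k + xL) (2^k + zL) := by
  set T := 2^k with hT
  have hTpos : 0 < T := Nat.pow_pos two_pos
  set y' := T*Y + yL with hy'
  set P := fun a => T*X + xL &&& a = 0 ∧ (y' - a) &&& (T*Z + zL) = 0 with hP
  set S : Finset ℕ := (Finset.range (y'+1)).filter P with hS
  set S0 := S.filter (fun a => a % T ≤ yL) with hS0
  set S1 := S.filter (fun a => ¬ (a % T ≤ yL)) with hS1
  have hpart : S0.card + S1.card = S.card :=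
    Finset.card_filter_add_card_filter_not _
  -- memberships in target products
  have memGen : ∀ (Y₀ : ℕ) (q : ℕ), q ∈ (Finset.range (Y₀+1)).filter
      (fun a => X &&& a = 0 ∧ (Y₀ - a) &&& Z = 0) ↔
      (q ≤ Y₀ ∧ X &&& q = 0 ∧ (Y₀ - q) &&& Z = 0) := by
    intro Y₀ q; simp [Finset.mem_filter, Finset.mem_range, Nat.lt_succ_iff]
  -- first bijection
  have h0 : S0.card = C Y X Z * C yL xL zL := by
    rw [C, C, ← Finset.card_product]
    apply Finset.card_bij' (fun a _ => (a / T, a % T)) (fun p _ => T*p.1 + p.2)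
    · -- maps into product
      intro a ha
      rw [hS0, Finset.mem_filter, hS, Finset.mem_filter, Finset.mem_range,
        Nat.lt_succ_iff] at ha
      obtain ⟨⟨hay, hx0, hz0⟩, hr⟩ := ha
      set q := a / T with hq; set r := a % T with hrdef
      have ha' : a = T*q + r := (Nat.div_add_mod a T).symm
      have hrT : r < T := Nat.mod_lt _ hTpos
      have hqY : q ≤ Y := by
        by_contra hc
        have h1 : T*(Y+1) ≤ T*q := Nat.mul_le_mul_left T (by omega)
        have e1 : T*(Y+1) = T*Y + T := by ring
        omega
      have hmul : T*(Y-q) + T*q = T*Y := by rw [← Nat.mul_add, Nat.sub_add_cancel hqY]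
      have hsub : y' - a = T*(Y-q) + (yL - r) := by omega
      rw [ha'] at hx0
      rw [hsub] at hz0
      rw [landZeroIff k X xL q r hx hrT] at hx0
      rw [landZeroIff k (Y-q) (yL-r) Z zL (by omega) (by omega)] at hz0
      rw [Finset.mem_product]
      exact ⟨(memGen Y q).mpr ⟨hqY, hx0.1, hz0.1⟩,
        C_mem.mpr ⟨hr, hx0.2, hz0.2⟩⟩
    · -- maps back into S0
      intro p hp
      rw [Finset.mem_product] at hp
      obtain ⟨hp1, hp2⟩ := hp
      rw [memGen] at hp1
      rw [C_mem] at hp2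
      obtain ⟨hqY, hXq, hYqZ⟩ := hp1
      obtain ⟨hry, hxr, hzr⟩ := hp2
      have hrT : p.2 < T := by omega
      have hmul : T*(Y-p.1) + T*p.1 = T*Y := by rw [← Nat.mul_add, Nat.sub_add_cancel hqY]
      have hle : T*p.1 ≤ T*Y := Nat.mul_le_mul_left T hqY
      rw [hS0, Finset.mem_filter, hS, Finset.mem_filter, Finset.mem_range, Nat.lt_succ_iff]
      refine ⟨⟨by omega, ?_, ?_⟩, ?_⟩
      · rw [landZeroIff k X xL p.1 p.2 hx hrT]; exact ⟨hXq, hxr⟩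
      · have hsub : y' - (T*p.1 + p.2) = T*(Y-p.1) + (yL - p.2) := by omega
        rw [hsub, landZeroIff k (Y-p.1) (yL-p.2) Z zL (by omega) (by omega)]
        exact ⟨hYqZ, hzr⟩
      · rw [Nat.mul_add_mod, Nat.mod_eq_of_lt hrT]; exact hry
    · intro a _; exact Nat.div_add_mod a T
    · intro p hp
      rw [Finset.mem_product] at hp
      obtain ⟨-, hp2⟩ := hp
      rw [C_mem] at hp2
      have hrT : p.2 < T := by omega
      rw [Nat.mul_add_div hTpos, Nat.mul_add_mod, Nat.div_eq_of_lt hrT,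
        Nat.mod_eq_of_lt hrT]
      simp
  -- second bijection
  have h1 : S1.card = C (Y-1) X Z * C (T + yL) (T + xL) (T + zL) := by
    rw [C, C, ← Finset.card_product]
    apply Finset.card_bij' (fun a _ => (a / T, a % T)) (fun p _ => T*p.1 + p.2)
    · intro a ha
      rw [hS1, Finset.mem_filter, hS, Finset.mem_filter, Finset.mem_range,
        Nat.lt_succ_iff] at ha
      obtain ⟨⟨hay, hx0, hz0⟩, hr⟩ := ha
      push_neg at hr
      set q := a / T with hq; set r := a % T with hrdef
      have ha' : a = T*q + r := (Nat.div_add_mod a T).symm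
      have hrT : r < T := Nat.mod_lt _ hTpos
      have hqY : q ≤ Y - 1 := by
        by_contra hc
        have : T*Y ≤ T*q := Nat.mul_le_mul_left T (by omega)
        omega
      have hmul : T*(Y-1-q) + T*q = T*(Y-1) := by
        rw [← Nat.mul_add, Nat.sub_add_cancel hqY]
      have hmul2 : T*(Y-1) + T = T*Y := by
        rw [← Nat.mul_succ]; congr 1; omega
      have hsub : y' - a = T*(Y-1-q) + (T + yL - r) := by omega
      rw [ha'] at hx0
      rw [hsub] at hz0
      rw [landZeroIff k X xL q r hx hrT] at hx0
      rw [landZeroIff k (Y-1-q) (T + yL - r) Z zL (by omega) (by omega)] at hz0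
      rw [Finset.mem_product]
      refine ⟨(memGen (Y-1) q).mpr ⟨hqY, hx0.1, hz0.1⟩, C_mem.mpr ⟨by omega, ?_, ?_⟩⟩
      · have : T + xL = T*1 + xL := by omega
        rw [this, show r = T*0 + r by omega, landZeroIff k 1 xL 0 r hx hrT]
        exact ⟨by simp, hx0.2⟩
      · have h2 : T + yL - r = T*0 + (T + yL - r) := by omega
        have h3 : T + zL = T*1 + zL := by omega
        rw [h2, h3, landZeroIff k 0 (T + yL - r) 1 zL (by omega) hz]
        exact ⟨by simp, hz0.2⟩
    · intro p hp
      rw [Finset.mem_product] at hp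
      obtain ⟨hp1, hp2⟩ := hp
      rw [memGen] at hp1
      rw [C_mem] at hp2
      obtain ⟨hqY, hXq, hYqZ⟩ := hp1
      obtain ⟨hry, hxr, hzr⟩ := hp2
      -- derive p.2 < T and p.2 > yL
      have hr2T : p.2 < 2*T := by omega
      have hrT : p.2 < T := by
        by_contra hc
        push_neg at hc
        have e : p.2 = T*1 + (p.2 - T) := by omega
        rw [e, show T + xL = T*1 + xL by omega,
          landZeroIff k 1 xL 1 (p.2 - T) hx (by omega)] at hxr
        simp at hxr
      have hryL : yL < p.2 := by
        by_contra hc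
        push_neg at hc
        have e : T + yL - p.2 = T*1 + (yL - p.2) := by omega
        rw [e, show T + zL = T*1 + zL by omega,
          landZeroIff k 1 (yL - p.2) 1 zL (by omega) hz] at hzr
        simp at hzr
      have hxr' : xL &&& p.2 = 0 := by
        rw [show T + xL = T*1 + xL by omega, show p.2 = T*0 + p.2 by omega,
          landZeroIff k 1 xL 0 p.2 hx hrT] at hxr
        exact hxr.2
      have hzr' : (T + yL - p.2) &&& zL = 0 := by
        rw [show T + yL - p.2 = T*0 + (T + yL - p.2) by omega,
          show T + zL = T*1 + zL by omega,
          landZeroIff k 0 (T + yL - p.2) 1 zL (by omega) hz] at hzr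
        exact hzr.2
      have hmul : T*(Y-1-p.1) + T*p.1 = T*(Y-1) := by
        rw [← Nat.mul_add, Nat.sub_add_cancel hqY]
      have hmul2 : T*(Y-1) + T = T*Y := by
        rw [← Nat.mul_succ]; congr 1; omega
      rw [hS1, Finset.mem_filter, hS, Finset.mem_filter, Finset.mem_range, Nat.lt_succ_iff]
      refine ⟨⟨by omega, ?_, ?_⟩, ?_⟩
      · rw [landZeroIff k X xL p.1 p.2 hx hrT]; exact ⟨hXq, hxr'⟩
      · have hsub : y' - (T*p.1 + p.2) = T*(Y-1-p.1) + (T + yL - p.2) := by omega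
        rw [hsub, landZeroIff k (Y-1-p.1) (T + yL - p.2) Z zL (by omega) (by omega)]
        exact ⟨hYqZ, hzr'⟩
      · rw [Nat.mul_add_mod, Nat.mod_eq_of_lt hrT]; omega
    · intro a _; exact Nat.div_add_mod a T
    · intro p hp
      rw [Finset.mem_product] at hp
      obtain ⟨hp1, hp2⟩ := hp
      rw [C_mem] at hp2
      obtain ⟨hry, hxr, hzr⟩ := hp2
      have hrT : p.2 < T := by
        by_contra hc
        push_neg at hc
        have e : p.2 = T*1 + (p.2 - T) := by omega
        rw [e, show T + xL = T*1 + xL by omega,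
          landZeroIff k 1 xL 1 (p.2 - T) hx (by omega)] at hxr
        simp at hxr
      rw [Nat.mul_add_div hTpos, Nat.mul_add_mod, Nat.div_eq_of_lt hrT,
        Nat.mod_eq_of_lt hrT]
      simp
  rw [C, ← hS, ← hpart, h0, h1]

theorem C_pos {y x z : ℕ} : 1 ≤ C y x z ↔ ∃ a, a ≤ y ∧ x &&& a = 0 ∧ (y - a) &&& z = 0 := by
  rw [C, Nat.one_le_iff_ne_zero, ← Nat.pos_iff_ne_zero, Finset.card_pos]
  constructor
  · rintro ⟨a, ha⟩; exact ⟨a, C_mem.mp ha⟩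
  · rintro ⟨a, ha⟩; exact ⟨a, C_mem.mpr ha⟩

theorem oddPred {a : ℕ} (h : a % 2 = 1) : (a-1) &&& a = a-1 := by
  have e : a = 2*(a/2) + 1 := by omega
  rw [show a - 1 = 2*(a/2) by omega]
  nth_rewrite 2 [e]
  rw [l01]
  simp

theorem factA (m x z : ℕ) (hm : 1 ≤ m) (h : 1 ≤ C (2^m+1) x z) : 1 ≤ C (2^m) x z := by
  obtain ⟨a, hay, hxa, hza⟩ := C_pos.mp h
  have hb : (2^m+1) - a = 2^m + 1 - a := rfl
  have hsum : a + (2^m+1-a) = 2^m + 1 := by omega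
  have hodd : (2^m) % 2 = 0 := by
    have : (2:ℕ)^m = 2*2^(m-1) := by
      rw [← pow_succ']; congr 1; omega
    omega
  rcases Nat.even_or_odd a with hpar | hpar
  · -- then b := 2^m+1-a is odd
    set b := 2^m+1-a with hbd
    have hbodd : b % 2 = 1 := by
      rcases hpar with ⟨t, ht⟩; omega
    have hb1 : 1 ≤ b := by omega
    apply C_pos.mpr
    refine ⟨a, by omega, hxa, ?_⟩
    have e : 2^m - a = b - 1 := by omega
    rw [e]
    exact landSub (oddPred hbodd) hza
  · have haodd : a % 2 = 1 := Nat.odd_iff.mp hpar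
    apply C_pos.mpr
    refine ⟨a - 1, by omega, ?_, ?_⟩
    · rw [Nat.land_comm]
      exact landSub (oddPred haodd) (by rw [Nat.land_comm]; exact hxa)
    · have e : 2^m - (a-1) = 2^m + 1 - a := by omega
      rw [e]; exact hza

theorem factB (k yL xL zL : ℕ) (hy : yL < 2^k) (hx : xL < 2^k) (hz : zL < 2^k)
    (h : 1 ≤ C (2^k + yL) (2^k + xL) (2^k + zL)) : 1 ≤ C yL xL zL := by
  set T := 2^k with hT
  have hTpos : 0 < T := Nat.pow_pos two_pos
  obtain ⟨a, hay, hxa, hza⟩ := C_pos.mp h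
  -- a < T
  have haT : a < T := by
    by_contra hc
    push_neg at hc
    rw [show T + xL = T*1 + xL by omega, show a = T*1 + (a - T) by omega,
      landZeroIff k 1 xL 1 (a-T) hx (by omega)] at hxa
    simp at hxa
  have hxa' : xL &&& a = 0 := by
    rw [show T + xL = T*1 + xL by omega, show a = T*0 + a by omega,
      landZeroIff k 1 xL 0 a hx haT] at hxa
    exact hxa.2
  set b := T + yL - a with hbd
  have hbT : b < T := by
    by_contra hc
    push_neg at hc
    rw [show T + zL = T*1 + zL by omega, show b = T*1 + (b - T) by omega,
      landZeroIff k 1 (b-T) 1 zL (by omega) hz] at hza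
    simp at hza
  have hzb : zL &&& b = 0 := by
    rw [show T + zL = T*1 + zL by omega, show b = T*0 + b by omega,
      landZeroIff k 0 b 1 zL hbT hz] at hza
    rw [Nat.land_comm]
    exact hza.2
  obtain ⟨a', b', ha', hb', hsum⟩ := subSub k a b haT hbT (by omega)
  apply C_pos.mpr
  refine ⟨a', by omega, ?_, ?_⟩
  · rw [Nat.land_comm]; exact landSub ha' (by rw [Nat.land_comm]; exact hxa')
  · rw [show yL - a' = b' by omega]
    exact landSub hb' (by rw [Nat.land_comm]; exact hzb)

theorem mul_min2 (u v : ℕ) : min 2 (u*v) = min 2 (min 2 u * min 2 v) := by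
  rcases Nat.lt_or_ge u 2 with hu | hu
  · interval_cases u <;> simp <;> omega
  · rcases Nat.eq_zero_or_pos v with rfl | hv
    · simp
    · have h2 : 2*1 ≤ u*v := Nat.mul_le_mul hu hv
      have e : min 2 u = 2 := by omega
      rw [e]
      have : min 2 v ≥ 1 := by omega
      have h3 : 2*1 ≤ 2 * min 2 v := by omega
      omega

theorem mainArith (k y ℓ : ℕ) (h1 : 2 ^ k ≤ y) (h2 : y < 2 ^ (k + 1))
    (h3 : k < ℓ) (x z : ℕ) :
    min 2 (C (2 ^ ℓ + y) x z) =
      min 2 (min 2 (C (2 ^ (ℓ - k)) (x / 2 ^ k) (z / 2 ^ k)) *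
               min 2 (C y (2 ^ k + x % 2 ^ k) (2 ^ k + z % 2 ^ k)) +
             min 2 (C (2 ^ (ℓ - k) + 1) (x / 2 ^ k) (z / 2 ^ k)) *
               min 2 (C y (x % 2 ^ k) (2 ^ k + z % 2 ^ k))) := by
  set T := 2^k with hT
  have hTpos : 0 < T := Nat.pow_pos two_pos
  set m := ℓ - k with hm
  have hm1 : 1 ≤ m := by omega
  set yL := y - T with hyL
  have hyLT : yL < T := by
    have : (2:ℕ)^(k+1) = 2*T := by rw [hT, pow_succ]; ring
    omega
  have hyT : y = T + yL := by omega
  have hxr : x % T < T := Nat.mod_lt _ hTpos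
  have hzr : z % T < T := Nat.mod_lt _ hTpos
  have hpow : (2:ℕ)^ℓ = T * 2^m := by
    rw [hT, ← pow_add]; congr 1; omega
  have hy' : 2^ℓ + y = T*(2^m + 1) + yL := by
    rw [hpow]; ring_nf; omega
  have hx' : x = T*(x/T) + x % T := (Nat.div_add_mod x T).symm
  have hz' : z = T*(z/T) + z % T := (Nat.div_add_mod z T).symm
  -- main split
  have hC := Csplit k (2^m+1) (x/T) (z/T) yL (x % T) (z % T) (Nat.le_add_left 1 (2^m)) hyLT hxr hzr
  rw [← hT, show (2^m+1) - 1 = 2^m from Nat.succ_sub_one _, ← hyT] at hC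
  have hsplit : C (2^ℓ + y) x z =
      C (2^m + 1) (x/T) (z/T) * C yL (x % T) (z % T) +
      C (2^m) (x/T) (z/T) * C y (T + x % T) (T + z % T) :=
    calc C (2^ℓ + y) x z
        = C (T*(2^m+1) + yL) (T*(x/T) + x % T) (T*(z/T) + z % T) := by
          rw [← hx', ← hz', ← hy']
      _ = _ := hC
  -- L split
  have hL := Csplit k 1 0 1 yL (x % T) (z % T) (le_refl 1) hyLT hxr hzr
  rw [← hT, show (1:ℕ) - 1 = 0 by rfl, show C 1 0 1 = 1 by decide,
    show C 0 0 1 = 1 by decide, ← hyT] at hL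
  have hLsplit : C y (x % T) (T + z % T) =
      C yL (x % T) (z % T) + C y (T + x % T) (T + z % T) :=
    calc C y (x % T) (T + z % T)
        = C (T*1 + yL) (T*0 + x % T) (T*1 + z % T) := by
          rw [show T*1 + yL = y by omega, show T*0 + x % T = x % T by omega,
            show T*1 + z % T = T + z % T by omega]
      _ = _ := by rw [hL]; ring
  set H0 := C (2^m + 1) (x/T) (z/T) with hH0
  set H1 := C (2^m) (x/T) (z/T) with hH1
  set D0 := C yL (x % T) (z % T) with hD0
  set S := C y (T + x % T) (T + z % T) with hSdef
  have hfA : 1 ≤ H0 → 1 ≤ H1 := factA m (x/T) (z/T) hm1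
  have hfB : 1 ≤ S → 1 ≤ D0 := by
    intro hs
    refine factB k yL (x % T) (z % T) hyLT hxr hzr ?_
    rw [← hyT]
    exact hs
  rw [hsplit, hLsplit]
  -- pure min-2 arithmetic
  rw [show min 2 (H0*D0 + H1*S) = min 2 (min 2 (H0*D0) + min 2 (H1*S)) by omega,
    mul_min2 H0 D0, mul_min2 H1 S]
  have b0 : min 2 H0 ≤ 2 := by omega
  have b1 : min 2 H1 ≤ 2 := by omega
  have bd : min 2 D0 ≤ 2 := by omega
  have bs : min 2 S ≤ 2 := by omega
  have iA : 1 ≤ min 2 H0 → 1 ≤ min 2 H1 := by intro h; have := hfA (by omega); omega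
  have iB : 1 ≤ min 2 S → 1 ≤ min 2 D0 := by intro h; have := hfB (by omega); omega
  have eL : min 2 (D0 + S) = min 2 (min 2 D0 + min 2 S) := by omega
  rw [eL]
  generalize min 2 H0 = h0 at b0 iA ⊢
  generalize min 2 H1 = h1 at b1 iA ⊢
  generalize min 2 D0 = d0 at bd iB ⊢
  generalize min 2 S = s0 at bs iB ⊢
  interval_cases h0 <;> interval_cases h1 <;> interval_cases d0 <;> interval_cases s0 <;> omega

theorem ulamAux_nil : ∀ n, ¬ ulamAux n [] := by
  intro n
  cases n with
  | zero => exact id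
  | succ n =>
    rw [ulamAux]
    simp only [List.length_nil]
    rw [if_neg (by omega)]
    rintro ⟨p, ⟨h1, h2, h3, h4, h5, h6⟩, -⟩
    exact h1 (List.append_eq_nil_iff.mp h4.symm).1

theorem ulamAux_congr : ∀ n, ∀ w : List Bool, w.length ≤ n →
    (ulamAux n w ↔ ulamAux w.length w) := by
  intro n
  induction n using Nat.strong_induction_on with
  | _ n IH =>
    intro w hw
    rcases Nat.eq_or_lt_of_le hw with heq | hlt
    · rw [heq]
    · obtain ⟨m, rfl⟩ : ∃ m, n = m + 1 := ⟨n - 1, by omega⟩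
      rcases hlw : w.length with _ | l
      · rw [List.length_eq_zero_iff.mp hlw]
        exact iff_of_false (ulamAux_nil _) (ulamAux_nil _)
      · rcases l with _ | l
        · rw [ulamAux, ulamAux, if_pos hlw, if_pos hlw]
        · rw [ulamAux]
          conv_rhs => rw [ulamAux]
          rw [if_neg (by omega), if_neg (by omega)]
          apply existsUnique_congr
          intro p
          constructor
          · rintro ⟨h1, h2, h3, h4, h5, h6⟩
            have hlen : p.1.length + p.2.length = l + 2 := by
              rw [← hlw, h4, List.length_append]
            have e1 : p.1.length ≤ m := by
              have := List.length_pos_iff.mpr h2; omega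
            have e2 : p.2.length ≤ m := by
              have := List.length_pos_iff.mpr h1; omega
            have e3 : p.1.length ≤ l + 1 := by
              have := List.length_pos_iff.mpr h2; omega
            have e4 : p.2.length ≤ l + 1 := by
              have := List.length_pos_iff.mpr h1; omega
            refine ⟨h1, h2, h3, h4, ?_, ?_⟩
            · rw [IH (l+1) (by omega) p.1 e3]
              rw [← IH m (by omega) p.1 e1]
              exact h5
            · rw [IH (l+1) (by omega) p.2 e4]
              rw [← IH m (by omega) p.2 e2]
              exact h6
          · rintro ⟨h1, h2, h3, h4, h5, h6⟩
            have hlen : p.1.length + p.2.length = l + 2 := by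
              rw [← hlw, h4, List.length_append]
            have e1 : p.1.length ≤ m := by
              have := List.length_pos_iff.mpr h2; omega
            have e2 : p.2.length ≤ m := by
              have := List.length_pos_iff.mpr h1; omega
            have e3 : p.1.length ≤ l + 1 := by
              have := List.length_pos_iff.mpr h2; omega
            have e4 : p.2.length ≤ l + 1 := by
              have := List.length_pos_iff.mpr h1; omega
            refine ⟨h1, h2, h3, h4, ?_, ?_⟩
            · rw [IH m (by omega) p.1 e1, ← IH (l+1) (by omega) p.1 e3]
              exact h5
            · rw [IH m (by omega) p.2 e2, ← IH (l+1) (by omega) p.2 e4]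
              exact h6

theorem isUlam_iff_exu (w : List Bool) (h : 2 ≤ w.length) :
    IsUlam w ↔ ∃! p : List Bool × List Bool,
      p.1 ≠ [] ∧ p.2 ≠ [] ∧ p.1 ≠ p.2 ∧ w = p.1 ++ p.2 ∧ IsUlam p.1 ∧ IsUlam p.2 := by
  obtain ⟨l, hl⟩ : ∃ l, w.length = l + 2 := ⟨w.length - 2, by omega⟩
  rw [IsUlam, hl, ulamAux, if_neg (by omega)]
  apply existsUnique_congr
  intro p
  constructor <;> rintro ⟨h1, h2, h3, h4, h5, h6⟩ <;>
    refine ⟨h1, h2, h3, h4, ?_, ?_⟩ <;>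
    [ (rw [IsUlam, ← ulamAux_congr (l+1)]);
      (rw [IsUlam, ← ulamAux_congr (l+1)]);
      (rw [IsUlam, ← ulamAux_congr (l+1)] at h5);
      (rw [IsUlam, ← ulamAux_congr (l+1)] at h6)] <;>
    first
      | assumption
      | (have hlen : p.1.length + p.2.length = l + 2 := by
           rw [← hl, h4, List.length_append]
         have := List.length_pos_iff.mpr h1
         have := List.length_pos_iff.mpr h2
         omega)

theorem isUlam_replicate : ∀ n, IsUlam (List.replicate n false) → n = 1 := by
  intro n
  induction n using Nat.strong_induction_on with
  | _ n IH =>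
    intro h
    rcases n with _ | n
    · exact absurd h (ulamAux_nil 0)
    · rcases n with _ | n
      · rfl
      · rw [isUlam_iff_exu _ (by simp)] at h
        obtain ⟨p, ⟨h1, h2, h3, h4, h5, h6⟩, -⟩ := h
        have m1 : ∀ b ∈ p.1, b = false := by
          intro b hb
          have : b ∈ List.replicate (n+2) false := by rw [h4]; exact List.mem_append_left _ hb
          exact (List.eq_of_mem_replicate this)
        have m2 : ∀ b ∈ p.2, b = false := by
          intro b hb
          have : b ∈ List.replicate (n+2) false := by rw [h4]; exact List.mem_append_right _ hb
          exact (List.eq_of_mem_replicate this)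
        have e1 : p.1 = List.replicate p.1.length false := List.eq_replicate_length.mpr m1
        have e2 : p.2 = List.replicate p.2.length false := List.eq_replicate_length.mpr m2
        have hlen : p.1.length + p.2.length = n + 2 := by
          rw [← List.length_append, ← h4, List.length_replicate]
        have l1 : p.1.length = 1 := by
          apply IH p.1.length (by have := List.length_pos_iff.mpr h2; omega)
          rw [← e1]; exact h5
        have l2 : p.2.length = 1 := by
          apply IH p.2.length (by have := List.length_pos_iff.mpr h1; omega)
          rw [← e2]; exact h6
        exact absurd (by rw [e1, e2, l1, l2] : p.1 = p.2) h3

theorem isUlam_false_only {w : List Bool} (h : IsUlam w) (hf : ∀ b ∈ w, b = false) :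
    w = [false] := by
  have e : w = List.replicate w.length false := List.eq_replicate_length.mpr hf
  have := isUlam_replicate w.length (by rw [← e]; exact h)
  rw [e, this]
  rfl

theorem wordTwo_length (x a : ℕ) : (wordTwo x a).length = x + a + 1 := by
  simp [wordTwo]; omega

theorem wordTwo_ne_nil (x a : ℕ) : wordTwo x a ≠ [] := by
  intro h
  have := wordTwo_length x a
  rw [h] at this
  simp at this

theorem true_mem_wordTwo (x a : ℕ) : true ∈ wordTwo x a := by
  simp [wordTwo]

theorem wordTwo_ne_falsesingle (x a : ℕ) : wordTwo x a ≠ [false] := by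
  intro h
  have := true_mem_wordTwo x a
  rw [h] at this
  simp at this

theorem wordTwo_cons (x a : ℕ) (hx : 1 ≤ x) : wordTwo x a = false :: wordTwo (x-1) a := by
  obtain ⟨x', rfl⟩ : ∃ x', x = x' + 1 := ⟨x - 1, by omega⟩
  simp [wordTwo, List.replicate_succ]

theorem wordTwo_concat (x a : ℕ) (ha : 1 ≤ a) :
    wordTwo x a = wordTwo x (a-1) ++ [false] := by
  obtain ⟨a', rfl⟩ : ∃ a', a = a' + 1 := ⟨a - 1, by omega⟩
  simp only [wordTwo, Nat.add_sub_cancel]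
  rw [List.replicate_succ']
  simp [List.append_assoc]

theorem wordTwo_split (x a : ℕ) (p q : List Bool) (hp : p ≠ []) (hq : q ≠ [])
    (h : wordTwo x a = p ++ q) :
    ((∀ b ∈ p, b = false) ∧ 1 ≤ p.length ∧ p.length ≤ x ∧ q = wordTwo (x - p.length) a) ∨
    ((∀ b ∈ q, b = false) ∧ 1 ≤ q.length ∧ q.length ≤ a ∧ p = wordTwo x (a - q.length)) := by
  set n := p.length with hn
  have hp' : p = (wordTwo x a).take n := by rw [h, List.take_left]
  have hq' : q = (wordTwo x a).drop n := by rw [h, List.drop_left]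
  have hlen : n + q.length = x + a + 1 := by
    rw [← wordTwo_length x a, h, List.length_append, hn]
  have hq1 : 1 ≤ q.length := List.length_pos_iff.mpr hq
  have hp1 : 1 ≤ n := List.length_pos_iff.mpr hp
  rcases le_or_gt n x with hc | hc
  · left
    have e : wordTwo x a = List.replicate x false ++ ([true] ++ List.replicate a false) := by
      simp [wordTwo]
    refine ⟨?_, hp1, hc, ?_⟩
    · intro b hb
      rw [hp'] at hb
      exact List.eq_of_mem_replicate (List.mem_of_mem_take (by
        rw [e, List.take_append_of_le_length (by simpa using hc)] at hb
        exact hb) )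
    · rw [hq', e, List.drop_append_of_le_length (by simpa using hc)]
      simp [wordTwo, List.drop_replicate]
  · right
    have e : wordTwo x a = (List.replicate x false ++ [true]) ++ List.replicate a false := by
      simp [wordTwo]
    have hofs : n = (List.replicate x false ++ [true]).length + (n - x - 1) := by
      simp; omega
    refine ⟨?_, hq1, by omega, ?_⟩
    · intro b hb
      rw [hq', e, hofs, List.drop_length_add_append] at hb
      exact List.eq_of_mem_replicate (List.mem_of_mem_drop hb)
    · rw [hp', e, hofs, List.take_length_add_append]
      have : a - q.length = n - x - 1 := by omega
      rw [this]
      simp [wordTwo, List.take_replicate]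
      omega

theorem exu_pair {α : Type*} {A B : α} {P Q : Prop} (hAB : A ≠ B) :
    (∃! p, (p = A ∧ P) ∨ (p = B ∧ Q)) ↔ Xor' P Q := by
  constructor
  · rintro ⟨p, hp, hu⟩
    rcases hp with ⟨hpA, hP⟩ | ⟨hpB, hQ⟩
    · left
      refine ⟨hP, fun hQ => ?_⟩
      exact hAB ((hu A (Or.inl ⟨rfl, hP⟩)).trans (hu B (Or.inr ⟨rfl, hQ⟩)).symm)
    · right
      refine ⟨hQ, fun hP => ?_⟩
      exact hAB ((hu A (Or.inl ⟨rfl, hP⟩)).trans (hu B (Or.inr ⟨rfl, hQ⟩)).symm)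
  · rintro (⟨hP, hnQ⟩ | ⟨hQ, hnP⟩)
    · exact ⟨A, Or.inl ⟨rfl, hP⟩, by rintro y (⟨rfl, -⟩ | ⟨rfl, hQ⟩); rfl; exact absurd hQ hnQ⟩
    · exact ⟨B, Or.inr ⟨rfl, hQ⟩, by rintro y (⟨rfl, hP⟩ | ⟨rfl, -⟩); exact absurd hP hnP; rfl⟩

theorem isUlam_false : IsUlam [false] := by
  rw [IsUlam]
  simp [ulamAux]

theorem isUlam_wordTwo : ∀ x a : ℕ, IsUlam (wordTwo x a) ↔ x &&& a = 0 := by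
  have main : ∀ n x a : ℕ, x + a = n → (IsUlam (wordTwo x a) ↔ x &&& a = 0) := by
    intro n
    induction n using Nat.strong_induction_on with
    | _ n IH =>
      intro x a hn
      rcases Nat.eq_zero_or_pos n with rfl | hpos
      · obtain ⟨rfl, rfl⟩ : x = 0 ∧ a = 0 := by omega
        apply iff_of_true
        · rw [IsUlam]
          simp [wordTwo, ulamAux]
        · rfl
      · rw [isUlam_iff_exu _ (by rw [wordTwo_length]; omega)]
        have hAB : (([false], wordTwo (x-1) a) : List Bool × List Bool) ≠
            (wordTwo x (a-1), [false]) := by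
          intro hc
          exact wordTwo_ne_falsesingle x (a-1) (congrArg Prod.fst hc).symm
        have hiff : ∀ p : List Bool × List Bool,
            (p.1 ≠ [] ∧ p.2 ≠ [] ∧ p.1 ≠ p.2 ∧ wordTwo x a = p.1 ++ p.2 ∧
              IsUlam p.1 ∧ IsUlam p.2) ↔
            ((p = ([false], wordTwo (x-1) a) ∧ (1 ≤ x ∧ IsUlam (wordTwo (x-1) a))) ∨
             (p = (wordTwo x (a-1), [false]) ∧ (1 ≤ a ∧ IsUlam (wordTwo x (a-1))))) := by
          intro p
          constructor
          · rintro ⟨h1, h2, h3, h4, h5, h6⟩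
            rcases wordTwo_split x a p.1 p.2 h1 h2 h4 with
              ⟨hf, hl1, hlx, hq⟩ | ⟨hf, hl1, hla, hq⟩
            · have e1 : p.1 = [false] := isUlam_false_only h5 hf
              have l1 : p.1.length = 1 := by rw [e1]; rfl
              rw [l1] at hlx hq
              left
              refine ⟨?_, hlx, by rw [← hq]; exact h6⟩
              ext : 1
              · exact e1
              · exact hq
            · have e2 : p.2 = [false] := isUlam_false_only h6 hf
              have l2 : p.2.length = 1 := by rw [e2]; rfl
              rw [l2] at hla hq
              right
              refine ⟨?_, hla, by rw [← hq]; exact h5⟩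
              ext : 1
              · exact hq
              · exact e2
          · rintro (⟨rfl, hx1, hU⟩ | ⟨rfl, ha1, hU⟩)
            · refine ⟨by simp, wordTwo_ne_nil _ _, ?_, ?_, isUlam_false, hU⟩
              · intro hc
                exact wordTwo_ne_falsesingle (x-1) a hc.symm
              · rw [wordTwo_cons x a hx1]; rfl
            · refine ⟨wordTwo_ne_nil _ _, by simp, ?_, ?_, hU, isUlam_false⟩
              · intro hc
                exact wordTwo_ne_falsesingle x (a-1) hc
              · rw [wordTwo_concat x a ha1]
        rw [existsUnique_congr hiff, exu_pair hAB]
        have c1 : (1 ≤ x ∧ IsUlam (wordTwo (x-1) a)) ↔ (0 < x ∧ (x-1) &&& a = 0) :=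
          and_congr_right (fun h => IH ((x-1)+a) (by omega) (x-1) a rfl)
        have c2 : (1 ≤ a ∧ IsUlam (wordTwo x (a-1))) ↔ (0 < a ∧ x &&& (a-1) = 0) :=
          and_congr_right (fun h => IH (x+(a-1)) (by omega) x (a-1) rfl)
        simp only [Xor']
        rw [c1, c2]
        have := lemX n x a hn hpos
        simp only [Xor'] at this
        exact this.symm
  exact fun x a => main (x+a) x a rfl

theorem culam_eq_C (y x z : ℕ) : culam y x z = min 2 (C y x z) := by
  rw [culam, C]
  congr 1
  rw [← Set.ncard_coe_finset]
  congr 1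
  ext a
  simp only [Set.mem_setOf_eq, Finset.coe_filter, Finset.mem_range, Nat.lt_succ_iff,
    isUlam_wordTwo]

end UlamAux

/-- external tensor decomposition of `culam[2^ℓ + y]` on `B_{ℓ+1}`,
where `S(x,z) = culam[y](2^k+x, 2^k+z)` and `L(x,z) = culam[y](x, 2^k+z)`. -/
theorem culam_add_two_pow (k y ℓ : ℕ) (h1 : 2 ^ k ≤ y) (h2 : y < 2 ^ (k + 1))
    (h3 : k < ℓ) (x z : ℕ) (hx : x < 2 ^ (ℓ + 1)) (hz : z < 2 ^ (ℓ + 1)) :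
    culam (2 ^ ℓ + y) x z =
      min 2 (culam (2 ^ (ℓ - k)) (x / 2 ^ k) (z / 2 ^ k) *
               culam y (2 ^ k + x % 2 ^ k) (2 ^ k + z % 2 ^ k) +
             culam (2 ^ (ℓ - k) + 1) (x / 2 ^ k) (z / 2 ^ k) *
               culam y (x % 2 ^ k) (2 ^ k + z % 2 ^ k)) := by
  rw [culam_eq_C, culam_eq_C, culam_eq_C, culam_eq_C, culam_eq_C]
  exact mainArith k y ℓ h1 h2 h3 x z
end

section
/- Let d ≥ 1 and let (x,z) ∈ B_d = {0,…,2^d−1}². Then min(2, M) = O1[d](x,z), where M is the number of integers a with 1 < a < 2^d such that w(x,a) and w(2^d+1−a,z) are both Ulam words. -/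
namespace UlamProof

/-! ### Bit arithmetic lemmas -/

lemma land_eq_zero_iff (A B : ℕ) :
    A &&& B = 0 ↔ (A % 2 = 0 ∨ B % 2 = 0) ∧ A / 2 &&& B / 2 = 0 := by
  constructor
  · intro h
    refine ⟨?_, by rw [← Nat.and_div_two, h]⟩
    by_contra hc
    push_neg at hc
    have h0 : (A &&& B).testBit 0 = true := by
      rw [Nat.testBit_land]
      simp only [Nat.testBit_zero, Bool.and_eq_true, decide_eq_true_eq]
      omega
    rw [h] at h0
    simp at h0
  · rintro ⟨h0, h1⟩
    apply Nat.zero_of_testBit_eq_false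
    intro i
    cases i with
    | zero =>
      rw [Nat.testBit_land]
      simp only [Nat.testBit_zero, Bool.and_eq_false_iff, decide_eq_false_iff_not]
      omega
    | succ i =>
      rw [Nat.testBit_add_one, Nat.and_div_two, h1]
      exact Nat.zero_testBit i

lemma add_lt_pow_of_land_eq_zero : ∀ (m : ℕ) (A B : ℕ), A &&& B = 0 →
    A < 2 ^ m → B < 2 ^ m → A + B < 2 ^ m := by
  intro m
  induction m with
  | zero => intro A B _ hA hB; interval_cases A <;> interval_cases B <;> simp
  | succ m ih =>
    intro A B h hA hB
    rw [land_eq_zero_iff] at h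
    have h2 : A / 2 + B / 2 < 2 ^ m := by
      apply ih _ _ h.2 <;> · have := pow_succ 2 m; omega
    have := pow_succ 2 m
    omega

lemma land_eq_zero_of_add_eq : ∀ (j : ℕ) (A B : ℕ), A + B = 2 ^ j - 1 → A &&& B = 0 := by
  intro j
  induction j with
  | zero => intro A B h; simp at h; obtain ⟨rfl, rfl⟩ := h; simp
  | succ j ih =>
    intro A B h
    have hp := pow_succ 2 j
    have hp0 : 0 < 2 ^ j := Nat.two_pow_pos _
    rw [land_eq_zero_iff]
    refine ⟨by omega, ih _ _ (by omega)⟩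

lemma mod_two_pow_succ (x k : ℕ) : x % 2 ^ (k + 1) = 2 * (x / 2 % 2 ^ k) + x % 2 := by
  have h : (2 : ℕ) ^ (k + 1) = 2 * 2 ^ k := by ring
  rw [h, Nat.mod_mul]
  omega

lemma exists_testBit_of_ne_zero {n : ℕ} (h : n ≠ 0) :
    ∃ i, n.testBit i = true := by
  by_contra hc
  push_neg at hc
  exact h (Nat.zero_of_testBit_eq_false (by simpa using hc))

lemma testBit_false_of_land_eq_zero {c A i : ℕ} (h : c &&& A = 0)
    (hA : A.testBit i = true) : c.testBit i = false := by
  have := congrArg (fun n => Nat.testBit n i) h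
  simp only [Nat.testBit_land, Nat.zero_testBit] at this
  rcases Bool.and_eq_false_iff.1 this with h' | h'
  · exact h'
  · rw [hA] at h'; simp at h'


/-! ### Counting machinery -/

lemma card_filter_range_succ (P : ℕ → Prop) [DecidablePred P] (k : ℕ) :
    ((Finset.range (k + 1)).filter P).card
      = ((Finset.range k).filter P).card + if P k then 1 else 0 := by
  rw [Finset.range_add_one, Finset.filter_insert]
  split
  · rw [Finset.card_insert_of_notMem (by simp)]
  · simp

lemma card_filter_range_even_odd (P : ℕ → Prop) [DecidablePred P] :
    ∀ n, ((Finset.range (2 * n)).filter P).card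
      = ((Finset.range n).filter (fun c => P (2 * c))).card
        + ((Finset.range n).filter (fun c => P (2 * c + 1))).card := by
  intro n
  induction n with
  | zero => simp
  | succ n ih =>
    have h2 : 2 * (n + 1) = (2 * n) + 1 + 1 := by ring
    rw [h2, card_filter_range_succ, card_filter_range_succ,
        card_filter_range_succ (fun c => P (2 * c)),
        card_filter_range_succ (fun c => P (2 * c + 1)), ih]
    split_ifs <;> omega

/-- number of "valid split positions", recursively -/
def kk : ℕ → ℕ → ℕ → ℕ
  | 0, _, _ => 0
  | m + 1, X, Z =>
      (if X % 2 = 0 ∧ Z % 2 = 0 ∧ X &&& Z = 0 then 1 else 0) + kk m (X / 2) (Z / 2)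

def Ur (M A B : ℕ) : Finset ℕ :=
  (Finset.range (2 ^ M)).filter (fun c => c &&& A = 0 ∧ (2 ^ M - 1 - c) &&& B = 0)

def Tr (m X Z : ℕ) : Finset ℕ :=
  (Finset.range (2 ^ m)).filter (fun c => c &&& X = 0 ∧ (2 ^ m - c) &&& Z = 0)

lemma ur_mem_false {M A B c : ℕ} (hA : A < 2 ^ M) (hAB : A &&& B ≠ 0) (hcM : c < 2 ^ M)
    (hc : c &&& A = 0) (hc2 : (2 ^ M - 1 - c) &&& B = 0) : False := by
  obtain ⟨i, hi⟩ := exists_testBit_of_ne_zero hAB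
  rw [Nat.testBit_land, Bool.and_eq_true] at hi
  have hiM : i < M := by
    by_contra hge
    have : A < 2 ^ i := lt_of_lt_of_le hA (Nat.pow_le_pow_right (by norm_num) (by omega))
    rw [Nat.testBit_eq_false_of_lt this] at hi
    simp at hi
  have hci : c.testBit i = false := testBit_false_of_land_eq_zero hc hi.1
  have hcompl : (2 ^ M - 1 - c).testBit i = true := by
    have h1 : 2 ^ M - 1 - c = 2 ^ M - (c + 1) := by omega
    rw [h1, Nat.testBit_two_pow_sub_succ hcM]
    simp [hiM, hci]
  have := testBit_false_of_land_eq_zero hc2 hi.2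
  rw [hcompl] at this
  simp at this

lemma card_Ur : ∀ (M A B : ℕ), A < 2 ^ M → B < 2 ^ M → A &&& B = 0 →
    (Ur M A B).card = 2 ^ kk M A B := by
  intro M
  induction M with
  | zero =>
    intro A B hA hB _
    have hA0 : A = 0 := by simpa using hA
    have hB0 : B = 0 := by simpa using hB
    subst hA0; subst hB0
    simp [Ur, kk, Finset.range_one, Finset.filter_singleton]
  | succ M ih =>
    intro A B hA hB hAB
    have hpow : (2:ℕ) ^ (M + 1) = 2 * 2 ^ M := by ring
    have hpos : (0:ℕ) < 2 ^ M := Nat.two_pow_pos _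
    have hP := (land_eq_zero_iff A B).1 hAB
    have hA' : A / 2 < 2 ^ M := by omega
    have hB' : B / 2 < 2 ^ M := by omega
    rw [Ur, hpow, card_filter_range_even_odd]
    -- even branch
    have heven : ((Finset.range (2 ^ M)).filter
        (fun c => (2 * c) &&& A = 0 ∧ (2 * 2 ^ M - 1 - 2 * c) &&& B = 0)).card
        = if B % 2 = 0 then (Ur M (A / 2) (B / 2)).card else 0 := by
      split_ifs with hB2
      · congr 1
        apply Finset.filter_congr
        intro c hc
        rw [Finset.mem_range] at hc
        rw [land_eq_zero_iff (2 * c) A, land_eq_zero_iff _ B]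
        have e1 : 2 * c / 2 = c := by omega
        have e2 : 2 * 2 ^ M - 1 - 2 * c = 2 * (2 ^ M - 1 - c) + 1 := by omega
        have e3 : (2 * (2 ^ M - 1 - c) + 1) / 2 = 2 ^ M - 1 - c := by omega
        rw [e1, e2, e3]
        have hm : 2 * c % 2 = 0 := by omega
        tauto
      · rw [Finset.card_eq_zero, Finset.filter_eq_empty_iff]
        intro c hc
        rw [Finset.mem_range] at hc
        intro hmem
        have e2 : 2 * 2 ^ M - 1 - 2 * c = 2 * (2 ^ M - 1 - c) + 1 := by omega
        have := (land_eq_zero_iff _ B).1 (e2 ▸ hmem.2)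
        omega
    -- odd branch
    have hodd : ((Finset.range (2 ^ M)).filter
        (fun c => (2 * c + 1) &&& A = 0 ∧ (2 * 2 ^ M - 1 - (2 * c + 1)) &&& B = 0)).card
        = if A % 2 = 0 then (Ur M (A / 2) (B / 2)).card else 0 := by
      split_ifs with hA2
      · congr 1
        apply Finset.filter_congr
        intro c hc
        rw [Finset.mem_range] at hc
        rw [land_eq_zero_iff (2 * c + 1) A, land_eq_zero_iff _ B]
        have e1 : (2 * c + 1) / 2 = c := by omega
        have e2 : 2 * 2 ^ M - 1 - (2 * c + 1) = 2 * (2 ^ M - 1 - c) := by omega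
        have e3 : 2 * (2 ^ M - 1 - c) / 2 = 2 ^ M - 1 - c := by omega
        rw [e1, e2, e3]
        have hm : 2 * (2 ^ M - 1 - c) % 2 = 0 := by omega
        tauto
      · rw [Finset.card_eq_zero, Finset.filter_eq_empty_iff]
        intro c hc
        rw [Finset.mem_range] at hc
        intro hmem
        have := (land_eq_zero_iff _ A).1 hmem.1
        omega
    rw [heven, hodd, ih _ _ hA' hB' hP.2]
    rcases Nat.even_or_odd A with hA2 | hA2 <;> rcases Nat.even_or_odd B with hB2 | hB2
    · have e1 : A % 2 = 0 := Nat.even_iff.1 hA2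
      have e2 : B % 2 = 0 := Nat.even_iff.1 hB2
      have : kk (M + 1) A B = 1 + kk M (A / 2) (B / 2) := by
        simp [kk, e1, e2, hAB]
      rw [this, pow_add, pow_one]; simp [e1, e2]; ring
    · have e1 : A % 2 = 0 := Nat.even_iff.1 hA2
      have e2 : B % 2 = 1 := Nat.odd_iff.1 hB2
      have : kk (M + 1) A B = kk M (A / 2) (B / 2) := by
        simp [kk, e2]
      rw [this]; simp [e1, e2]
    · have e1 : A % 2 = 1 := Nat.odd_iff.1 hA2
      have e2 : B % 2 = 0 := Nat.even_iff.1 hB2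
      have : kk (M + 1) A B = kk M (A / 2) (B / 2) := by
        simp [kk, e1]
      rw [this]; simp [e1, e2]
    · have e1 : A % 2 = 1 := Nat.odd_iff.1 hA2
      have e2 : B % 2 = 1 := Nat.odd_iff.1 hB2
      obtain hp | hp := hP.1 <;> omega
lemma card_Tr : ∀ (m X Z : ℕ), X < 2 ^ m → Z < 2 ^ m →
    (Tr m X Z).card = 2 ^ kk m X Z := by
  intro m
  induction m with
  | zero =>
    intro X Z hX hZ
    have hX0 : X = 0 := by simpa using hX
    have hZ0 : Z = 0 := by simpa using hZ
    subst hX0; subst hZ0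
    simp [Tr, kk, Finset.range_one, Finset.filter_singleton]
  | succ m ih =>
    intro X Z hX hZ
    have hpow : (2:ℕ) ^ (m + 1) = 2 * 2 ^ m := by ring
    have hpos : (0:ℕ) < 2 ^ m := Nat.two_pow_pos _
    have hX' : X / 2 < 2 ^ m := by omega
    have hZ' : Z / 2 < 2 ^ m := by omega
    rw [Tr, hpow, card_filter_range_even_odd]
    have heven : ((Finset.range (2 ^ m)).filter
        (fun c => (2 * c) &&& X = 0 ∧ (2 * 2 ^ m - 2 * c) &&& Z = 0)).card
        = (Tr m (X / 2) (Z / 2)).card := by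
      congr 1
      apply Finset.filter_congr
      intro c hc
      rw [Finset.mem_range] at hc
      rw [land_eq_zero_iff (2 * c) X, land_eq_zero_iff _ Z]
      have e1 : 2 * c / 2 = c := by omega
      have e2 : 2 * 2 ^ m - 2 * c = 2 * (2 ^ m - c) := by omega
      have e3 : 2 * (2 ^ m - c) / 2 = 2 ^ m - c := by omega
      rw [e1, e2, e3]
      have hm : 2 * c % 2 = 0 := by omega
      have hm2 : 2 * (2 ^ m - c) % 2 = 0 := by omega
      tauto
    have hodd : ((Finset.range (2 ^ m)).filter
        (fun c => (2 * c + 1) &&& X = 0 ∧ (2 * 2 ^ m - (2 * c + 1)) &&& Z = 0)).card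
        = if X % 2 = 0 ∧ Z % 2 = 0 then (Ur m (X / 2) (Z / 2)).card else 0 := by
      split_ifs with hXZ
      · congr 1
        apply Finset.filter_congr
        intro c hc
        rw [Finset.mem_range] at hc
        rw [land_eq_zero_iff (2 * c + 1) X, land_eq_zero_iff _ Z]
        have e1 : (2 * c + 1) / 2 = c := by omega
        have e2 : 2 * 2 ^ m - (2 * c + 1) = 2 * (2 ^ m - 1 - c) + 1 := by omega
        have e3 : (2 * (2 ^ m - 1 - c) + 1) / 2 = 2 ^ m - 1 - c := by omega
        rw [e1, e2, e3]
        have hm : (2 * c + 1) % 2 = 1 := by omega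
        have hm2 : (2 * (2 ^ m - 1 - c) + 1) % 2 = 1 := by omega
        constructor
        · rintro ⟨⟨_, h1⟩, ⟨_, h2⟩⟩; exact ⟨h1, h2⟩
        · rintro ⟨h1, h2⟩; exact ⟨⟨Or.inr hXZ.1, h1⟩, ⟨Or.inr hXZ.2, h2⟩⟩
      · rw [Finset.card_eq_zero, Finset.filter_eq_empty_iff]
        intro c hc
        rw [Finset.mem_range] at hc
        rintro ⟨h1, h2⟩
        have e2 : 2 * 2 ^ m - (2 * c + 1) = 2 * (2 ^ m - 1 - c) + 1 := by omega
        have q1 := (land_eq_zero_iff _ X).1 h1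
        have q2 := (land_eq_zero_iff _ Z).1 (e2 ▸ h2)
        have hm : ¬((2 * c + 1) % 2 = 0) := by omega
        have hm2 : ¬((2 * (2 ^ m - 1 - c) + 1) % 2 = 0) := by omega
        tauto
    rw [heven, hodd, ih _ _ hX' hZ']
    by_cases hC : X % 2 = 0 ∧ Z % 2 = 0 ∧ X &&& Z = 0
    · have hC' : X % 2 = 0 ∧ Z % 2 = 0 := ⟨hC.1, hC.2.1⟩
      have hP := (land_eq_zero_iff X Z).1 hC.2.2
      rw [if_pos hC', card_Ur _ _ _ hX' hZ' hP.2]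
      have : kk (m + 1) X Z = 1 + kk m (X / 2) (Z / 2) := by simp [kk, hC]
      rw [this, pow_add, pow_one]
      ring
    · have : kk (m + 1) X Z = kk m (X / 2) (Z / 2) := by
        simp only [kk]
        rw [if_neg hC]; omega
      rw [this]
      by_cases hC' : X % 2 = 0 ∧ Z % 2 = 0
      · -- then X &&& Z ≠ 0
        have hne : X / 2 &&& Z / 2 ≠ 0 := by
          intro h0
          exact hC ⟨hC'.1, hC'.2, (land_eq_zero_iff X Z).2 ⟨Or.inl hC'.1, h0⟩⟩
        have hUr : Ur m (X / 2) (Z / 2) = ∅ := by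
          rw [Finset.eq_empty_iff_forall_notMem]
          intro c hcmem
          rw [Ur, Finset.mem_filter, Finset.mem_range] at hcmem
          exact ur_mem_false hX' hne hcmem.1 hcmem.2.1 hcmem.2.2
        rw [if_pos hC', hUr]
        simp
      · rw [if_neg hC']
        simp

lemma kk_pos_iff : ∀ (m X Z : ℕ), X < 2 ^ m → Z < 2 ^ m →
    (1 ≤ kk m X Z ↔ X + Z + 2 ≤ 2 ^ m) := by
  intro m
  induction m with
  | zero =>
    intro X Z hX hZ
    have hX0 : X = 0 := by simpa using hX
    have hZ0 : Z = 0 := by simpa using hZ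
    subst hX0; subst hZ0
    simp [kk]
  | succ m ih =>
    intro X Z hX hZ
    have hpow : (2:ℕ) ^ (m + 1) = 2 * 2 ^ m := by ring
    have hpos : (0:ℕ) < 2 ^ m := Nat.two_pow_pos _
    have hX' : X / 2 < 2 ^ m := by omega
    have hZ' : Z / 2 < 2 ^ m := by omega
    have hrec := ih (X / 2) (Z / 2) hX' hZ'
    by_cases hC : X % 2 = 0 ∧ Z % 2 = 0 ∧ X &&& Z = 0
    · have h1 : 1 ≤ kk (m + 1) X Z := by simp [kk, hC]
      have hP := (land_eq_zero_iff X Z).1 hC.2.2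
      have hlt : X / 2 + Z / 2 < 2 ^ m := add_lt_pow_of_land_eq_zero m _ _ hP.2 hX' hZ'
      constructor
      · intro _; omega
      · intro _; exact h1
    · have hkk : kk (m + 1) X Z = kk m (X / 2) (Z / 2) := by
        simp only [kk]; rw [if_neg hC]; omega
      rw [hkk, hrec]
      -- case analysis on parities
      rcases Nat.even_or_odd X with hX2 | hX2 <;> rcases Nat.even_or_odd Z with hZ2 | hZ2
      · -- both even, so X &&& Z ≠ 0
        have e1 : X % 2 = 0 := Nat.even_iff.1 hX2
        have e2 : Z % 2 = 0 := Nat.even_iff.1 hZ2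
        have hne : X &&& Z ≠ 0 := fun h0 => hC ⟨e1, e2, h0⟩
        have hne2 : X / 2 + Z / 2 ≠ 2 ^ m - 1 := by
          intro heq
          have := land_eq_zero_of_add_eq m (X / 2) (Z / 2) heq
          exact hne ((land_eq_zero_iff X Z).2 ⟨Or.inl e1, this⟩)
        omega
      · have e1 : X % 2 = 0 := Nat.even_iff.1 hX2
        have e2 : Z % 2 = 1 := Nat.odd_iff.1 hZ2
        omega
      · have e1 : X % 2 = 1 := Nat.odd_iff.1 hX2
        have e2 : Z % 2 = 0 := Nat.even_iff.1 hZ2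
        omega
      · have e1 : X % 2 = 1 := Nat.odd_iff.1 hX2
        have e2 : Z % 2 = 1 := Nat.odd_iff.1 hZ2
        omega
/-! ### findGreatest analysis -/

lemma lt_pow_of_testBit_false {n k : ℕ} (h1 : n < 2 ^ (k + 1)) (h2 : n.testBit k = false) :
    n < 2 ^ k := by
  rw [Nat.testBit_eq_decide_div_mod_eq] at h2
  simp only [decide_eq_false_iff_not] at h2
  have hpos : (0:ℕ) < 2 ^ k := Nat.two_pow_pos _
  have hp : (2:ℕ) ^ (k + 1) = 2 ^ k * 2 := by ring
  have h4 : n / 2 ^ k < 2 := by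
    rw [Nat.div_lt_iff_lt_mul hpos]
    omega
  obtain ⟨v, hv⟩ : ∃ v, n / 2 ^ k = v := ⟨_, rfl⟩
  rw [hv] at h2 h4
  have hv0 : v = 0 := by omega
  have hd := Nat.div_add_mod n (2 ^ k)
  have hm : n % 2 ^ k < 2 ^ k := Nat.mod_lt _ hpos
  rw [hv, hv0] at hd
  simp at hd
  omega

lemma land_mod_two_pow (X Z t : ℕ) :
    (X % 2 ^ t) &&& (Z % 2 ^ t) = (X &&& Z) % 2 ^ t := by
  apply Nat.eq_of_testBit_eq
  intro i
  simp only [Nat.testBit_land, Nat.testBit_mod_two_pow]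
  by_cases h : i < t <;> simp [h]

lemma mod_lt_iff_testBit (x e : ℕ) : x % 2 ^ (e + 1) < 2 ^ e ↔ x.testBit e = false := by
  have h1 : x.testBit e = (x % 2 ^ (e + 1)).testBit e := by
    simp [Nat.testBit_mod_two_pow]
  have h2 : x % 2 ^ (e + 1) < 2 ^ (e + 1) := Nat.mod_lt _ (by positivity)
  constructor
  · intro h
    rw [h1]
    exact Nat.testBit_eq_false_of_lt h
  · intro h
    exact lt_pow_of_testBit_false h2 (h1 ▸ h)

lemma findGreatest_congr (P Q : ℕ → Prop) [DecidablePred P] [DecidablePred Q]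
    (h : ∀ n, P n ↔ Q n) : ∀ b, Nat.findGreatest P b = Nat.findGreatest Q b := by
  intro b
  induction b with
  | zero => rfl
  | succ b ih =>
    rw [Nat.findGreatest_succ, Nat.findGreatest_succ, ih]
    by_cases hq : Q (b + 1)
    · rw [if_pos ((h _).2 hq), if_pos hq]
    · rw [if_neg (fun hp => hq ((h _).1 hp)), if_neg hq]

/-- valid split positions -/
def validT (X Z t : ℕ) : Prop :=
  X.testBit t = false ∧ Z.testBit t = false ∧ X &&& Z < 2 ^ (t + 1)

instance : ∀ X Z t, Decidable (validT X Z t) := fun X Z t => by unfold validT; infer_instance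

lemma card_filter_range_shift (P : ℕ → Prop) [DecidablePred P] :
    ∀ n, ((Finset.range (n + 1)).filter P).card
      = (if P 0 then 1 else 0) + ((Finset.range n).filter (fun i => P (i + 1))).card := by
  intro n
  induction n with
  | zero =>
    rw [card_filter_range_succ]
    simp
  | succ n ih =>
    rw [card_filter_range_succ, ih, card_filter_range_succ (fun i => P (i + 1))]
    split_ifs <;> omega

lemma kv_eq_kk : ∀ (m X Z : ℕ),
    ((Finset.range m).filter (validT X Z)).card = kk m X Z := by
  intro m
  induction m with
  | zero => intro X Z; simp [kk]
  | succ m ih =>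
    intro X Z
    rw [card_filter_range_shift]
    have h1 : ((Finset.range m).filter (fun i => validT X Z (i + 1))).card
        = kk m (X / 2) (Z / 2) := by
      rw [← ih (X / 2) (Z / 2)]
      congr 1
      apply Finset.filter_congr
      intro t _
      unfold validT
      rw [Nat.testBit_add_one, Nat.testBit_add_one]
      have hd : (X &&& Z) / 2 = X / 2 &&& Z / 2 := Nat.and_div_two
      have hp : (2:ℕ) ^ (t + 1 + 1) = 2 * 2 ^ (t + 1) := by ring
      constructor
      · rintro ⟨a, b, c⟩; exact ⟨a, b, by rw [← hd]; omega⟩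
      · rintro ⟨a, b, c⟩; rw [← hd] at c; exact ⟨a, b, by omega⟩
    have h0 : validT X Z 0 ↔ (X % 2 = 0 ∧ Z % 2 = 0 ∧ X &&& Z = 0) := by
      unfold validT
      simp only [Nat.testBit_zero, decide_eq_false_iff_not, pow_one]
      constructor
      · rintro ⟨a, b, c⟩
        have hb0 : (X &&& Z).testBit 0 = false := by
          rw [Nat.testBit_land]
          simp only [Nat.testBit_zero, Bool.and_eq_false_iff, decide_eq_false_iff_not]
          omega
        simp only [Nat.testBit_zero, decide_eq_false_iff_not] at hb0
        refine ⟨by omega, by omega, by omega⟩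
      · rintro ⟨a, b, c⟩
        refine ⟨by omega, by omega, by omega⟩
    rw [h1]
    show (if validT X Z 0 then 1 else 0) + _ = kk (m + 1) X Z
    simp only [kk]
    rw [if_congr h0 rfl rfl]

lemma kk_two_iff (m X Z : ℕ) (hX : X < 2 ^ m) (hZ : Z < 2 ^ m) :
    2 ≤ kk m X Z ↔ 1 ≤ kk m X Z ∧
      X % 2 ^ (Nat.findGreatest (fun e => X.testBit e = false ∧ Z.testBit e = false) (m - 1))
      + Z % 2 ^ (Nat.findGreatest (fun e => X.testBit e = false ∧ Z.testBit e = false) (m - 1))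
      + 2 ≤ 2 ^ (Nat.findGreatest (fun e => X.testBit e = false ∧ Z.testBit e = false) (m - 1)) := by
  set g := Nat.findGreatest (fun e => X.testBit e = false ∧ Z.testBit e = false) (m - 1) with hg
  set V := (Finset.range m).filter (validT X Z) with hV
  have hcard : V.card = kk m X Z := kv_eq_kk m X Z
  rcases Finset.eq_empty_or_nonempty V with hne | hne
  · rw [← hcard, hne]
    simp
  · have hm0 : 0 < m := by
      obtain ⟨s, hs⟩ := hne
      rw [hV, Finset.mem_filter, Finset.mem_range] at hs
      omega
    set t₁ := V.max' hne with ht₁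
    have ht₁mem : t₁ ∈ V := V.max'_mem hne
    have ht₁' : t₁ < m ∧ validT X Z t₁ := by
      have := ht₁mem
      rw [hV, Finset.mem_filter, Finset.mem_range] at this
      exact this
    -- g = t₁
    have hgt : g = t₁ := by
      rw [hg]
      rw [Nat.findGreatest_eq_iff]
      refine ⟨by omega, fun _ => ⟨ht₁'.2.1, ht₁'.2.2.1⟩, ?_⟩
      intro n hn hnm ⟨hXn, hZn⟩
      have hvn : validT X Z n :=
        ⟨hXn, hZn, lt_of_lt_of_le ht₁'.2.2.2
          (Nat.pow_le_pow_right (by norm_num) (by omega))⟩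
      have : n ∈ V := by
        rw [hV, Finset.mem_filter, Finset.mem_range]
        exact ⟨by omega, hvn⟩
      have := V.le_max' n this
      omega
    -- X &&& Z < 2 ^ t₁
    have hland : X &&& Z < 2 ^ t₁ := by
      apply lt_pow_of_testBit_false ht₁'.2.2.2
      rw [Nat.testBit_land, ht₁'.2.1]
      simp
    -- erase
    have herase : V.erase t₁ =
        (Finset.range t₁).filter (validT (X % 2 ^ t₁) (Z % 2 ^ t₁)) := by
      ext s
      rw [Finset.mem_erase, hV, Finset.mem_filter, Finset.mem_range,
        Finset.mem_filter, Finset.mem_range]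
      constructor
      · rintro ⟨hst, hsm, hvs⟩
        have hsle : s ≤ t₁ := V.le_max' s (by rw [hV, Finset.mem_filter, Finset.mem_range]; exact ⟨hsm, hvs⟩)
        have hslt : s < t₁ := by omega
        refine ⟨hslt, ?_, ?_, ?_⟩
        · rw [Nat.testBit_mod_two_pow]
          simp [hslt, hvs.1]
        · rw [Nat.testBit_mod_two_pow]
          simp [hslt, hvs.2.1]
        · rw [land_mod_two_pow, Nat.mod_eq_of_lt hland]
          exact hvs.2.2
      · rintro ⟨hslt, h1, h2, h3⟩
        rw [land_mod_two_pow, Nat.mod_eq_of_lt hland] at h3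
        rw [Nat.testBit_mod_two_pow] at h1 h2
        simp only [hslt, decide_true, Bool.true_and] at h1 h2
        exact ⟨by omega, by omega, h1, h2, h3⟩
    have hcard2 : V.card = (V.erase t₁).card + 1 := by
      rw [Finset.card_erase_of_mem ht₁mem]
      have : 1 ≤ V.card := Finset.card_pos.2 hne
      omega
    have hmodlt : X % 2 ^ t₁ < 2 ^ t₁ := Nat.mod_lt _ (by positivity)
    have hmodlt2 : Z % 2 ^ t₁ < 2 ^ t₁ := Nat.mod_lt _ (by positivity)
    have hkey : (V.erase t₁).card = kk t₁ (X % 2 ^ t₁) (Z % 2 ^ t₁) := by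
      rw [herase, kv_eq_kk]
    have hL1 := kk_pos_iff t₁ (X % 2 ^ t₁) (Z % 2 ^ t₁) hmodlt hmodlt2
    rw [hgt]
    constructor
    · intro h2
      refine ⟨by omega, ?_⟩
      rw [← hL1, ← hkey]
      omega
    · rintro ⟨_, hcond⟩
      rw [← hL1, ← hkey] at hcond
      omega
/-! ### Ulam words -/

lemma ulamAux_step : ∀ (n : ℕ) (w : List Bool), w.length ≤ n →
    (ulamAux (n + 1) w ↔ ulamAux n w) := by
  intro n
  induction n with
  | zero =>
    intro w hw
    have hw0 : w = [] := List.length_eq_zero_iff.1 (by omega)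
    subst hw0
    simp only [ulamAux, List.length_nil]
    constructor
    · rintro h
      rw [if_neg (by norm_num)] at h
      obtain ⟨p, ⟨h1, _, _, h4, _⟩, _⟩ := h
      exact h1 (List.append_eq_nil_iff.1 h4.symm).1
    · exact fun h => h.elim
  | succ n ih =>
    intro w hw
    show (if w.length = 1 then True else _) ↔ (if w.length = 1 then True else _)
    by_cases h1 : w.length = 1
    · rw [if_pos h1, if_pos h1]
    · rw [if_neg h1, if_neg h1]
      apply existsUnique_congr
      intro p
      constructor
      · rintro ⟨a, b, c, d, e, f⟩
        have hl1 : p.1.length ≤ n := by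
          have := congrArg List.length d
          simp only [List.length_append] at this
          have : 1 ≤ p.2.length := by
            cases hp : p.2
            · exact absurd hp b
            · simp [hp]
          omega
        have hl2 : p.2.length ≤ n := by
          have := congrArg List.length d
          simp only [List.length_append] at this
          have : 1 ≤ p.1.length := by
            cases hp : p.1
            · exact absurd hp a
            · simp [hp]
          omega
        exact ⟨a, b, c, d, (ih p.1 hl1).1 e, (ih p.2 hl2).1 f⟩
      · rintro ⟨a, b, c, d, e, f⟩
        have hl1 : p.1.length ≤ n := by
          have := congrArg List.length d
          simp only [List.length_append] at this
          have : 1 ≤ p.2.length := by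
            cases hp : p.2
            · exact absurd hp b
            · simp [hp]
          omega
        have hl2 : p.2.length ≤ n := by
          have := congrArg List.length d
          simp only [List.length_append] at this
          have : 1 ≤ p.1.length := by
            cases hp : p.1
            · exact absurd hp a
            · simp [hp]
          omega
        exact ⟨a, b, c, d, (ih p.1 hl1).2 e, (ih p.2 hl2).2 f⟩

lemma ulamAux_of_le {n m : ℕ} (w : List Bool) (hw : w.length ≤ n) (h : n ≤ m) :
    (ulamAux m w ↔ ulamAux n w) := by
  induction m with
  | zero =>
    have : n = 0 := by omega
    rw [this]
  | succ m ih =>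
    by_cases hnm : n = m + 1
    · rw [hnm]
    · have hn : n ≤ m := by omega
      rw [ulamAux_step m w (le_trans hw hn), ih hn]

lemma isUlam_iff_of_ne_one {w : List Bool} (hw : w.length ≠ 1) :
    IsUlam w ↔ ∃! p : List Bool × List Bool,
      p.1 ≠ [] ∧ p.2 ≠ [] ∧ p.1 ≠ p.2 ∧ w = p.1 ++ p.2 ∧ IsUlam p.1 ∧ IsUlam p.2 := by
  unfold IsUlam
  cases hl : w.length with
  | zero =>
    have hw0 : w = [] := List.length_eq_zero_iff.1 hl
    subst hw0
    simp only [ulamAux]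
    constructor
    · exact fun h => h.elim
    · rintro ⟨p, ⟨h1, _, _, h4, _⟩, _⟩
      exact absurd (List.append_eq_nil_iff.1 h4.symm).1 h1
  | succ k =>
    rw [hl] at hw
    simp only [ulamAux]
    rw [if_neg (by omega)]
    apply existsUnique_congr
    intro p
    constructor
    · rintro ⟨a, b, c, d, e, f⟩
      have hlen := congrArg List.length d
      simp only [List.length_append, hl] at hlen
      have hp1 : 1 ≤ p.1.length := by
        cases hp : p.1
        · exact absurd hp a
        · simp [hp]
      have hp2 : 1 ≤ p.2.length := by
        cases hp : p.2
        · exact absurd hp b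
        · simp [hp]
      exact ⟨a, b, c, d,
        (ulamAux_of_le p.1 (le_refl _) (by omega)).1 e,
        (ulamAux_of_le p.2 (le_refl _) (by omega)).1 f⟩
    · rintro ⟨a, b, c, d, e, f⟩
      have hlen := congrArg List.length d
      simp only [List.length_append, hl] at hlen
      have hp1 : 1 ≤ p.1.length := by
        cases hp : p.1
        · exact absurd hp a
        · simp [hp]
      have hp2 : 1 ≤ p.2.length := by
        cases hp : p.2
        · exact absurd hp b
        · simp [hp]
      exact ⟨a, b, c, d,
        (ulamAux_of_le p.1 (le_refl _) (by omega)).2 e,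
        (ulamAux_of_le p.2 (le_refl _) (by omega)).2 f⟩

lemma isUlam_singleton (b : Bool) : IsUlam [b] := by
  unfold IsUlam
  simp [ulamAux]

lemma isUlam_replicate_iff : ∀ n, IsUlam (List.replicate n false) ↔ n = 1 := by
  intro n
  induction n using Nat.strong_induction_on with
  | _ n ih =>
    match n with
    | 0 => simp [IsUlam, ulamAux]
    | 1 => simpa using isUlam_singleton false
    | (k + 2) =>
      constructor
      · intro h
        rw [isUlam_iff_of_ne_one (by simp)] at h
        obtain ⟨p, ⟨h1, h2, h3, h4, h5, h6⟩, _⟩ := h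
        have hall : ∀ b ∈ List.replicate (k + 2) false, b = false := by
          intro b hb
          exact List.eq_of_mem_replicate hb
        have hp1 : p.1 = List.replicate p.1.length false := by
          apply List.eq_replicate_iff.2
          refine ⟨rfl, fun b hb => hall b ?_⟩
          rw [h4]
          exact List.mem_append_left _ hb
        have hp2 : p.2 = List.replicate p.2.length false := by
          apply List.eq_replicate_iff.2
          refine ⟨rfl, fun b hb => hall b ?_⟩
          rw [h4]
          exact List.mem_append_right _ hb
        have hlen := congrArg List.length h4
        simp only [List.length_append, List.length_replicate] at hlen
        have hq1 : 1 ≤ p.1.length := by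
          cases hp : p.1
          · exact absurd hp h1
          · simp [hp]
        have hq2 : 1 ≤ p.2.length := by
          cases hp : p.2
          · exact absurd hp h2
          · simp [hp]
        have e1 : p.1.length = 1 := by
          have := (ih p.1.length (by omega))
          rw [← this]
          rw [hp1] at h5
          exact h5
        have e2 : p.2.length = 1 := by
          have := (ih p.2.length (by omega))
          rw [← this]
          rw [hp2] at h6
          exact h6
        rw [e1] at hp1; rw [e2] at hp2
        exact absurd (hp1.trans hp2.symm) h3
      · omega

lemma wordTwo_length (x y : ℕ) : (wordTwo x y).length = x + y + 1 := by
  simp [wordTwo]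
  omega

lemma wordTwo_ne_nil (x y : ℕ) : wordTwo x y ≠ [] := by
  intro h
  have := congrArg List.length h
  rw [wordTwo_length] at this
  simp at this

lemma true_mem_wordTwo (x y : ℕ) : true ∈ wordTwo x y := by
  simp [wordTwo]

lemma wordTwo_ne_replicate (x y n : ℕ) : wordTwo x y ≠ List.replicate n false := by
  intro h
  have := true_mem_wordTwo x y
  rw [h] at this
  have := List.eq_of_mem_replicate this
  simp at this

lemma wordTwo_cons (x y : ℕ) (hx : 1 ≤ x) :
    wordTwo x y = false :: wordTwo (x - 1) y := by
  unfold wordTwo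
  obtain ⟨x', rfl⟩ : ∃ x', x = x' + 1 := ⟨x - 1, by omega⟩
  rw [List.replicate_succ]
  simp

lemma wordTwo_concat (x y : ℕ) (hy : 1 ≤ y) :
    wordTwo x y = wordTwo x (y - 1) ++ [false] := by
  unfold wordTwo
  obtain ⟨y', rfl⟩ : ∃ y', y = y' + 1 := ⟨y - 1, by omega⟩
  rw [List.replicate_succ']
  simp
lemma wordTwo_decomp (x y : ℕ) (p : List Bool × List Bool)
    (h1 : p.1 ≠ []) (h2 : p.2 ≠ []) (h4 : wordTwo x y = p.1 ++ p.2)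
    (h5 : IsUlam p.1) (h6 : IsUlam p.2) :
    (1 ≤ x ∧ p = ([false], wordTwo (x - 1) y)) ∨
    (1 ≤ y ∧ p = (wordTwo x (y - 1), [false])) := by
  set k := p.1.length with hk
  have hq1 : 1 ≤ p.1.length := by
    cases hp : p.1
    · exact absurd hp h1
    · simp [hp]
  have hq2 : 1 ≤ p.2.length := by
    cases hp : p.2
    · exact absurd hp h2
    · simp [hp]
  have hlen := congrArg List.length h4
  rw [wordTwo_length, List.length_append] at hlen
  have hp1take : p.1 = (wordTwo x y).take k := by
    rw [h4, hk, List.take_left]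
  have hp2drop : p.2 = (wordTwo x y).drop k := by
    rw [h4, hk, List.drop_left]
  by_cases hcase : k ≤ x
  · -- p.1 is all zeros
    left
    have hrep : p.1 = List.replicate k false := by
      rw [hp1take]
      show ((List.replicate x false ++ [true]) ++ List.replicate y false).take k
        = List.replicate k false
      rw [List.take_append_of_le_length (by simp; omega),
          List.take_append_of_le_length (by simp; omega), List.take_replicate]
      congr 1
      omega
    have hk1 : k = 1 := by
      rw [← isUlam_replicate_iff k, ← hrep]
      exact h5
    have hx1 : 1 ≤ x := by omega
    have hp1 : p.1 = [false] := by rw [hrep, hk1]; rfl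
    have hcons := wordTwo_cons x y hx1
    rw [hcons, hp1] at h4
    have hp2 : p.2 = wordTwo (x - 1) y := by
      have h4' : ([false] : List Bool) ++ wordTwo (x - 1) y = [false] ++ p.2 := by
        simpa using h4
      exact (List.append_cancel_left h4').symm
    exact ⟨hx1, Prod.ext hp1 hp2⟩
  · -- p.2 is all zeros
    right
    push_neg at hcase
    obtain ⟨n, hn⟩ : ∃ n, k = (x + 1) + n := ⟨k - (x + 1), by omega⟩
    have hrep : p.2 = List.replicate (y - n) false := by
      rw [hp2drop]
      show ((List.replicate x false ++ [true]) ++ List.replicate y false).drop k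
        = List.replicate (y - n) false
      have e4 : (List.replicate x false ++ [true]).length + n = k := by simp; omega
      rw [← e4, List.drop_append, List.drop_replicate]
      simp
    have hk1 : y - n = 1 := by
      rw [← isUlam_replicate_iff (y - n), ← hrep]
      exact h6
    have hy1 : 1 ≤ y := by omega
    have hp2 : p.2 = [false] := by rw [hrep, hk1]; rfl
    have hconc := wordTwo_concat x y hy1
    rw [hconc, hp2] at h4
    have hp1 : p.1 = wordTwo x (y - 1) :=
      (List.append_cancel_right h4).symm
    exact ⟨hy1, Prod.ext hp1 hp2⟩

lemma existsUnique_two_cases {α : Type*} {A B : Prop} {a b : α} (hab : a ≠ b) :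
    (∃! p : α, (A ∧ p = a) ∨ (B ∧ p = b)) ↔ ((A ∧ ¬B) ∨ (B ∧ ¬A)) := by
  constructor
  · rintro ⟨p, hp, huniq⟩
    rcases hp with ⟨hA, rfl⟩ | ⟨hB, rfl⟩
    · left
      refine ⟨hA, fun hB => ?_⟩
      exact hab (huniq b (Or.inr ⟨hB, rfl⟩)).symm
    · right
      refine ⟨hB, fun hA => ?_⟩
      exact hab (huniq a (Or.inl ⟨hA, rfl⟩))
  · rintro (⟨hA, hnB⟩ | ⟨hB, hnA⟩)
    · refine ⟨a, Or.inl ⟨hA, rfl⟩, ?_⟩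
      rintro q (⟨_, rfl⟩ | ⟨hB, rfl⟩)
      · rfl
      · exact absurd hB hnB
    · refine ⟨b, Or.inr ⟨hB, rfl⟩, ?_⟩
      rintro q (⟨hA, rfl⟩ | ⟨_, rfl⟩)
      · exact absurd hA hnA
      · rfl

lemma land_zero_even_left {x : ℕ} (y : ℕ) (h : x % 2 = 0) :
    x &&& y = 0 ↔ x / 2 &&& y / 2 = 0 := by
  rw [land_eq_zero_iff]
  tauto

lemma land_zero_even_right (x : ℕ) {y : ℕ} (h : y % 2 = 0) :
    x &&& y = 0 ↔ x / 2 &&& y / 2 = 0 := by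
  rw [land_eq_zero_iff]
  tauto

lemma land_ne_zero_odd_odd {x y : ℕ} (hx : x % 2 = 1) (hy : y % 2 = 1) :
    x &&& y ≠ 0 := by
  intro h
  have := ((land_eq_zero_iff x y).1 h).1
  omega

/-- exact-one-decomposition arithmetic characterization -/
lemma land_char : ∀ (s x y : ℕ), x + y ≤ s → 1 ≤ x + y →
    (x &&& y = 0 ↔
      (((1 ≤ x ∧ (x - 1) &&& y = 0) ∧ ¬(1 ≤ y ∧ x &&& (y - 1) = 0)) ∨
       ((1 ≤ y ∧ x &&& (y - 1) = 0) ∧ ¬(1 ≤ x ∧ (x - 1) &&& y = 0)))) := by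
  intro s
  induction s with
  | zero => intro x y hs h1; omega
  | succ s ih =>
    intro x y hs h1
    rcases Nat.even_or_odd x with hx2 | hx2 <;> rcases Nat.even_or_odd y with hy2 | hy2
    · -- both even
      have ex : x % 2 = 0 := Nat.even_iff.1 hx2
      have ey : y % 2 = 0 := Nat.even_iff.1 hy2
      have hxy2 : 1 ≤ x / 2 + y / 2 := by omega
      have hxy2' : x / 2 + y / 2 ≤ s := by omega
      have hIH := ih (x / 2) (y / 2) hxy2' hxy2
      have m1 : x &&& y = 0 ↔ x / 2 &&& y / 2 = 0 := land_zero_even_left y ex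
      have mA : (1 ≤ x ∧ (x - 1) &&& y = 0) ↔ (1 ≤ x / 2 ∧ (x / 2 - 1) &&& (y / 2) = 0) := by
        constructor
        · rintro ⟨hx1, hA⟩
          have e1 : (x - 1) % 2 = 1 := by omega
          have e2 : (x - 1) / 2 = x / 2 - 1 := by omega
          rw [land_zero_even_right _ ey, e2] at hA
          exact ⟨by omega, hA⟩
        · rintro ⟨hx1, hA⟩
          have e2 : (x - 1) / 2 = x / 2 - 1 := by omega
          refine ⟨by omega, ?_⟩
          rw [land_zero_even_right _ ey, e2]
          exact hA
      have mB : (1 ≤ y ∧ x &&& (y - 1) = 0) ↔ (1 ≤ y / 2 ∧ (x / 2) &&& (y / 2 - 1) = 0) := by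
        constructor
        · rintro ⟨hy1, hB⟩
          have e2 : (y - 1) / 2 = y / 2 - 1 := by omega
          rw [land_zero_even_left _ ex, e2] at hB
          exact ⟨by omega, hB⟩
        · rintro ⟨hy1, hB⟩
          have e2 : (y - 1) / 2 = y / 2 - 1 := by omega
          refine ⟨by omega, ?_⟩
          rw [land_zero_even_left _ ex, e2]
          exact hB
      rw [m1, mA, mB, hIH]
    · -- x even, y odd
      have ex : x % 2 = 0 := Nat.even_iff.1 hx2
      have ey : y % 2 = 1 := Nat.odd_iff.1 hy2
      have m1 : x &&& y = 0 ↔ x / 2 &&& y / 2 = 0 := land_zero_even_left y ex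
      have mB : (1 ≤ y ∧ x &&& (y - 1) = 0) ↔ x / 2 &&& y / 2 = 0 := by
        have e2 : (y - 1) / 2 = y / 2 := by omega
        have e3 : (y - 1) % 2 = 0 := by omega
        rw [land_zero_even_right _ e3, e2]
        constructor
        · exact fun h => h.2
        · exact fun h => ⟨by omega, h⟩
      have mA : ¬(1 ≤ x ∧ (x - 1) &&& y = 0) := by
        rintro ⟨hx1, hA⟩
        exact land_ne_zero_odd_odd (by omega) ey hA
      rw [m1, ← mB]
      tauto
    · -- x odd, y even
      have ex : x % 2 = 1 := Nat.odd_iff.1 hx2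
      have ey : y % 2 = 0 := Nat.even_iff.1 hy2
      have m1 : x &&& y = 0 ↔ x / 2 &&& y / 2 = 0 := land_zero_even_right x ey
      have mA : (1 ≤ x ∧ (x - 1) &&& y = 0) ↔ x / 2 &&& y / 2 = 0 := by
        have e2 : (x - 1) / 2 = x / 2 := by omega
        have e3 : (x - 1) % 2 = 0 := by omega
        rw [land_zero_even_left _ e3, e2]
        constructor
        · exact fun h => h.2
        · exact fun h => ⟨by omega, h⟩
      have mB : ¬(1 ≤ y ∧ x &&& (y - 1) = 0) := by
        rintro ⟨hy1, hB⟩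
        exact land_ne_zero_odd_odd ex (by omega) hB
      rw [m1, ← mA]
      tauto
    · -- both odd
      have ex : x % 2 = 1 := Nat.odd_iff.1 hx2
      have ey : y % 2 = 1 := Nat.odd_iff.1 hy2
      have m1 : x &&& y ≠ 0 := land_ne_zero_odd_odd ex ey
      have mA : (1 ≤ x ∧ (x - 1) &&& y = 0) ↔ x / 2 &&& y / 2 = 0 := by
        have e2 : (x - 1) / 2 = x / 2 := by omega
        have e3 : (x - 1) % 2 = 0 := by omega
        rw [land_zero_even_left _ e3, e2]
        constructor
        · exact fun h => h.2
        · exact fun h => ⟨by omega, h⟩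
      have mB : (1 ≤ y ∧ x &&& (y - 1) = 0) ↔ x / 2 &&& y / 2 = 0 := by
        have e2 : (y - 1) / 2 = y / 2 := by omega
        have e3 : (y - 1) % 2 = 0 := by omega
        rw [land_zero_even_right _ e3, e2]
        constructor
        · exact fun h => h.2
        · exact fun h => ⟨by omega, h⟩
      constructor
      · intro h; exact absurd h m1
      · rintro (⟨hA, hnB⟩ | ⟨hB, hnA⟩)
        · exact absurd (mB.2 (mA.1 hA)) hnB
        · exact absurd (mA.2 (mB.1 hB)) hnA

lemma isUlam_wordTwo : ∀ (x y : ℕ), IsUlam (wordTwo x y) ↔ x &&& y = 0 := by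
  suffices H : ∀ (s x y : ℕ), x + y ≤ s → (IsUlam (wordTwo x y) ↔ x &&& y = 0) by
    intro x y
    exact H (x + y) x y (le_refl _)
  intro s
  induction s with
  | zero =>
    intro x y hs
    have hx0 : x = 0 := by omega
    have hy0 : y = 0 := by omega
    subst hx0; subst hy0
    have : wordTwo 0 0 = [true] := rfl
    rw [this]
    simp [isUlam_singleton]
  | succ s ih =>
    intro x y hs
    by_cases hxy : x + y ≤ s
    · exact ih x y hxy
    · have h1xy : 1 ≤ x + y := by omega
      have hlen1 : (wordTwo x y).length ≠ 1 := by
        rw [wordTwo_length]; omega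
      rw [isUlam_iff_of_ne_one hlen1]
      set A := 1 ≤ x ∧ (x - 1) &&& y = 0 with hA
      set B := 1 ≤ y ∧ x &&& (y - 1) = 0 with hB
      have hchar : ∀ p : List Bool × List Bool,
          (p.1 ≠ [] ∧ p.2 ≠ [] ∧ p.1 ≠ p.2 ∧ wordTwo x y = p.1 ++ p.2 ∧
            IsUlam p.1 ∧ IsUlam p.2)
          ↔ ((A ∧ p = ([false], wordTwo (x - 1) y)) ∨
             (B ∧ p = (wordTwo x (y - 1), [false]))) := by
        intro p
        constructor
        · rintro ⟨h1, h2, h3, h4, h5, h6⟩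
          rcases wordTwo_decomp x y p h1 h2 h4 h5 h6 with ⟨hx1, rfl⟩ | ⟨hy1, rfl⟩
          · left
            refine ⟨⟨hx1, ?_⟩, rfl⟩
            rw [← ih (x - 1) y (by omega)]
            exact h6
          · right
            refine ⟨⟨hy1, ?_⟩, rfl⟩
            rw [← ih x (y - 1) (by omega)]
            exact h5
        · rintro (⟨⟨hx1, hA'⟩, rfl⟩ | ⟨⟨hy1, hB'⟩, rfl⟩)
          · refine ⟨by simp, wordTwo_ne_nil _ _, ?_, ?_, isUlam_singleton false, ?_⟩
            · intro hc
              exact wordTwo_ne_replicate (x - 1) y 1 (by simpa using hc.symm)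
            · exact wordTwo_cons x y hx1
            · rw [ih (x - 1) y (by omega)]
              exact hA'
          · refine ⟨wordTwo_ne_nil _ _, by simp, ?_, ?_, ?_, isUlam_singleton false⟩
            · intro hc
              exact wordTwo_ne_replicate x (y - 1) 1 (by simpa using hc)
            · exact wordTwo_concat x y hy1
            · rw [ih x (y - 1) (by omega)]
              exact hB'
      have hne : (([false], wordTwo (x - 1) y) : List Bool × List Bool)
          ≠ (wordTwo x (y - 1), [false]) := by
        intro hc
        have h' := congrArg Prod.fst hc
        exact wordTwo_ne_replicate x (y - 1) 1 (by simpa using h'.symm)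
      calc (∃! p : List Bool × List Bool, p.1 ≠ [] ∧ p.2 ≠ [] ∧ p.1 ≠ p.2 ∧
              wordTwo x y = p.1 ++ p.2 ∧ IsUlam p.1 ∧ IsUlam p.2)
          ↔ (∃! p : List Bool × List Bool,
              (A ∧ p = ([false], wordTwo (x - 1) y)) ∨
              (B ∧ p = (wordTwo x (y - 1), [false]))) := existsUnique_congr hchar
        _ ↔ ((A ∧ ¬B) ∨ (B ∧ ¬A)) := existsUnique_two_cases hne
        _ ↔ x &&& y = 0 := (land_char (x + y) x y (le_refl _) h1xy).symm
/-! ### final assembly helpers -/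

lemma two_pow_land_eq_zero {t A : ℕ} (h : A < 2 ^ t) : 2 ^ t &&& A = 0 := by
  rw [Nat.two_pow_and, Nat.testBit_eq_false_of_lt h]
  simp

lemma card_filter_gt_one (Q : ℕ → Prop) [DecidablePred Q] :
    ∀ n, ((Finset.range (n + 2)).filter Q).card
      = ((Finset.range (n + 2)).filter (fun a => 1 < a ∧ Q a)).card
        + (if Q 0 then 1 else 0) + (if Q 1 then 1 else 0) := by
  intro n
  induction n with
  | zero =>
    have h2 : (0:ℕ) + 2 = 1 + 1 := rfl
    rw [h2, card_filter_range_succ, card_filter_range_succ,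
      card_filter_range_succ (fun a => 1 < a ∧ Q a),
      card_filter_range_succ (fun a => 1 < a ∧ Q a)]
    simp only [Finset.range_zero, Finset.filter_empty, Finset.card_empty]
    have c1 : ¬(1 < 0 ∧ Q 0) := by rintro ⟨h, -⟩; omega
    have c2 : ¬(1 < 1 ∧ Q 1) := by rintro ⟨h, -⟩; omega
    rw [if_neg c1, if_neg c2]
  | succ n ih =>
    have h2 : n + 1 + 2 = (n + 2) + 1 := rfl
    rw [h2, card_filter_range_succ, card_filter_range_succ (fun a => 1 < a ∧ Q a), ih]
    have h12 : (1 < n + 2 ∧ Q (n + 2)) ↔ Q (n + 2) := by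
      constructor
      · exact fun h => h.2
      · exact fun h => ⟨by omega, h⟩
    rw [if_congr h12 rfl rfl]
    omega

lemma eIdx_eq_findGreatest (d x z : ℕ) :
    eIdx d x z = Nat.findGreatest
      (fun e => x.testBit e = false ∧ z.testBit e = false) (d - 1) := by
  unfold eIdx
  exact findGreatest_congr _ _
    (fun e => and_congr (mod_lt_iff_testBit x e) (mod_lt_iff_testBit z e)) (d - 1)

lemma eIdx_bridge (d x z : ℕ) (hd : 2 ≤ d) (hpar : x % 2 + z % 2 = 1) :
    ((x % 2 ^ eIdx d x z + z % 2 ^ eIdx d x z < 2 ^ eIdx d x z - 1) ↔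
    (x / 2 % 2 ^ (Nat.findGreatest
        (fun e => (x / 2).testBit e = false ∧ (z / 2).testBit e = false) (d - 1 - 1))
     + z / 2 % 2 ^ (Nat.findGreatest
        (fun e => (x / 2).testBit e = false ∧ (z / 2).testBit e = false) (d - 1 - 1))
     + 2 ≤ 2 ^ (Nat.findGreatest
        (fun e => (x / 2).testBit e = false ∧ (z / 2).testBit e = false) (d - 1 - 1)))) := by
  set G := Nat.findGreatest
      (fun e => (x / 2).testBit e = false ∧ (z / 2).testBit e = false) (d - 1 - 1) with hG
  have hE := eIdx_eq_findGreatest d x z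
  by_cases hex : ∃ e, e ≤ d - 1 - 1 ∧ ((x / 2).testBit e = false ∧ (z / 2).testBit e = false)
  · obtain ⟨e0, he0, he0'⟩ := hex
    have hGp : (x / 2).testBit G = false ∧ (z / 2).testBit G = false := by
      rw [hG]
      exact Nat.findGreatest_spec
        (P := fun e => (x / 2).testBit e = false ∧ (z / 2).testBit e = false) he0 he0'
    have hGle : G ≤ d - 1 - 1 := by rw [hG]; exact Nat.findGreatest_le _
    have hEeq : eIdx d x z = G + 1 := by
      rw [hE, Nat.findGreatest_eq_iff]
      refine ⟨by omega, fun _ => ?_, ?_⟩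
      · rw [Nat.testBit_add_one, Nat.testBit_add_one]
        exact hGp
      · intro n hn hnle hP
        obtain ⟨n', rfl⟩ : ∃ n', n = n' + 1 := ⟨n - 1, by omega⟩
        rw [Nat.testBit_add_one, Nat.testBit_add_one] at hP
        have hgg : G < n' := by omega
        have := Nat.findGreatest_is_greatest
          (P := fun e => (x / 2).testBit e = false ∧ (z / 2).testBit e = false)
          (hG ▸ hgg) (by omega : n' ≤ d - 1 - 1)
        exact this hP
    rw [hEeq]
    have hx' := mod_two_pow_succ x G
    have hz' := mod_two_pow_succ z G
    have hpg : (0:ℕ) < 2 ^ G := Nat.two_pow_pos _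
    have hpG : (2:ℕ) ^ (G + 1) = 2 * 2 ^ G := by ring
    omega
  · have hG0 : G = 0 := by
      rw [hG, Nat.findGreatest_eq_zero_iff]
      intro n hn hnle hP
      exact hex ⟨n, hnle, hP⟩
    have hE0 : eIdx d x z = 0 := by
      rw [hE, Nat.findGreatest_eq_zero_iff]
      intro n hn hnle hP
      obtain ⟨n', rfl⟩ : ∃ n', n = n' + 1 := ⟨n - 1, by omega⟩
      rw [Nat.testBit_add_one, Nat.testBit_add_one] at hP
      exact hex ⟨n', by omega, hP⟩
    rw [hE0, hG0]
    simp [Nat.mod_one]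
end UlamProof
/-- `O1[d]` counts (in caveman style) representations
`w(x,2^d+1,z) = w(x,a) * w(2^d + 1 - a, z)` with `1 < a < 2^d`. -/
theorem O1_counts (d : ℕ) (hd : 1 ≤ d) (x z : ℕ) (hx : x < 2 ^ d) (hz : z < 2 ^ d) :
    min 2 {a : ℕ | 1 < a ∧ a < 2 ^ d ∧ IsUlam (wordTwo x a) ∧
      IsUlam (wordTwo (2 ^ d + 1 - a) z)}.ncard = O1 d x z := by
  classical
  have hpow : (2:ℕ) ^ d = 2 * 2 ^ (d - 1) := by
    obtain ⟨d', rfl⟩ : ∃ d', d = d' + 1 := ⟨d - 1, by omega⟩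
    rw [pow_succ]
    simp
    ring
  have hpos : (0:ℕ) < 2 ^ (d - 1) := Nat.two_pow_pos _
  have hX : x / 2 < 2 ^ (d - 1) := by omega
  have hZ : z / 2 < 2 ^ (d - 1) := by omega
  have hset : {a : ℕ | 1 < a ∧ a < 2 ^ d ∧ IsUlam (wordTwo x a) ∧
      IsUlam (wordTwo (2 ^ d + 1 - a) z)} =
      ↑((Finset.range (2 ^ d)).filter
        (fun a => 1 < a ∧ (x &&& a = 0 ∧ (2 ^ d + 1 - a) &&& z = 0))) := by
    ext a
    rw [Set.mem_setOf_eq, Finset.mem_coe, Finset.mem_filter, Finset.mem_range]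
    rw [UlamProof.isUlam_wordTwo, UlamProof.isUlam_wordTwo]
    tauto
  rw [hset, Set.ncard_coe_finset]
  obtain ⟨n2, hn2⟩ : ∃ n2, 2 ^ d = n2 + 2 := ⟨2 ^ d - 2, by omega⟩
  have hgt := UlamProof.card_filter_gt_one
    (fun a => x &&& a = 0 ∧ (2 ^ d + 1 - a) &&& z = 0) n2
  rw [← hn2] at hgt
  have hb0 : (x &&& 0 = 0 ∧ (2 ^ d + 1 - 0) &&& z = 0) ↔ z % 2 = 0 := by
    have h0 : x &&& 0 = 0 := Nat.and_zero x
    have hdd : 2 ^ d + 1 - 0 = 2 ^ d + 1 := rfl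
    rw [hdd, UlamProof.land_eq_zero_iff (2 ^ d + 1) z]
    have hdiv : (2 ^ d + 1) / 2 = 2 ^ (d - 1) := by omega
    have hmod : (2 ^ d + 1) % 2 = 1 := by omega
    rw [hdiv]
    have hzz : 2 ^ (d - 1) &&& z / 2 = 0 := UlamProof.two_pow_land_eq_zero hZ
    constructor
    · rintro ⟨-, hor, -⟩
      omega
    · intro hz2
      exact ⟨h0, Or.inr hz2, hzz⟩
  have hb1 : (x &&& 1 = 0 ∧ (2 ^ d + 1 - 1) &&& z = 0) ↔ x % 2 = 0 := by
    have e1 : 2 ^ d + 1 - 1 = 2 ^ d := by omega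
    rw [e1, Nat.and_one_is_mod]
    have h2 : 2 ^ d &&& z = 0 := UlamProof.two_pow_land_eq_zero hz
    constructor
    · rintro ⟨h, -⟩; exact h
    · intro h; exact ⟨h, h2⟩
  simp only [hb0, hb1] at hgt
  have hsplit : ((Finset.range (2 ^ d)).filter
      (fun a => x &&& a = 0 ∧ (2 ^ d + 1 - a) &&& z = 0)).card
      = (if z % 2 = 0 then 2 ^ (UlamProof.kk (d - 1) (x / 2) (z / 2)) else 0)
        + (if x % 2 = 0 then 2 ^ (UlamProof.kk (d - 1) (x / 2) (z / 2)) else 0) := by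
    rw [hpow, UlamProof.card_filter_range_even_odd]
    have heven : ((Finset.range (2 ^ (d - 1))).filter
        (fun c => x &&& (2 * c) = 0 ∧ (2 * 2 ^ (d - 1) + 1 - 2 * c) &&& z = 0)).card
        = if z % 2 = 0 then (UlamProof.Tr (d - 1) (x / 2) (z / 2)).card else 0 := by
      split_ifs with hz2
      · congr 1
        apply Finset.filter_congr
        intro c hc
        rw [Finset.mem_range] at hc
        rw [UlamProof.land_eq_zero_iff x (2 * c), UlamProof.land_eq_zero_iff _ z]
        have e1 : 2 * c / 2 = c := by omega
        have e2 : 2 * 2 ^ (d - 1) + 1 - 2 * c = 2 * (2 ^ (d - 1) - c) + 1 := by omega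
        have e3 : (2 * (2 ^ (d - 1) - c) + 1) / 2 = 2 ^ (d - 1) - c := by omega
        rw [e1, e2, e3, Nat.land_comm (x / 2) c]
        have hm : 2 * c % 2 = 0 := by omega
        tauto
      · rw [Finset.card_eq_zero, Finset.filter_eq_empty_iff]
        intro c hc
        rw [Finset.mem_range] at hc
        rintro ⟨h1, h2⟩
        have e2 : 2 * 2 ^ (d - 1) + 1 - 2 * c = 2 * (2 ^ (d - 1) - c) + 1 := by omega
        have := (UlamProof.land_eq_zero_iff _ z).1 (e2 ▸ h2)
        omega
    have hodd : ((Finset.range (2 ^ (d - 1))).filter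
        (fun c => x &&& (2 * c + 1) = 0 ∧ (2 * 2 ^ (d - 1) + 1 - (2 * c + 1)) &&& z = 0)).card
        = if x % 2 = 0 then (UlamProof.Tr (d - 1) (x / 2) (z / 2)).card else 0 := by
      split_ifs with hx2
      · congr 1
        apply Finset.filter_congr
        intro c hc
        rw [Finset.mem_range] at hc
        rw [UlamProof.land_eq_zero_iff x (2 * c + 1), UlamProof.land_eq_zero_iff _ z]
        have e1 : (2 * c + 1) / 2 = c := by omega
        have e2 : 2 * 2 ^ (d - 1) + 1 - (2 * c + 1) = 2 * (2 ^ (d - 1) - c) := by omega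
        have e3 : 2 * (2 ^ (d - 1) - c) / 2 = 2 ^ (d - 1) - c := by omega
        rw [e1, e2, e3, Nat.land_comm (x / 2) c]
        have hm : 2 * (2 ^ (d - 1) - c) % 2 = 0 := by omega
        tauto
      · rw [Finset.card_eq_zero, Finset.filter_eq_empty_iff]
        intro c hc
        rw [Finset.mem_range] at hc
        rintro ⟨h1, h2⟩
        have := (UlamProof.land_eq_zero_iff _ (2 * c + 1)).1 h1
        omega
    rw [heven, hodd, UlamProof.card_Tr (d - 1) (x / 2) (z / 2) hX hZ]
  rw [hsplit] at hgt
  have hKpos := UlamProof.kk_pos_iff (d - 1) (x / 2) (z / 2) hX hZ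
  have htwo := UlamProof.kk_two_iff (d - 1) (x / 2) (z / 2) hX hZ
  set K := UlamProof.kk (d - 1) (x / 2) (z / 2) with hKdef
  have h2K1 : (1:ℕ) ≤ 2 ^ K := Nat.two_pow_pos _
  have h2K2 : 1 ≤ K → (2:ℕ) ≤ 2 ^ K := fun h => by
    calc (2:ℕ) = 2 ^ 1 := rfl
    _ ≤ 2 ^ K := Nat.pow_le_pow_right (by norm_num) h
  have h2K4 : 2 ≤ K → (4:ℕ) ≤ 2 ^ K := fun h => by
    calc (4:ℕ) = 2 ^ 2 := rfl
    _ ≤ 2 ^ K := Nat.pow_le_pow_right (by norm_num) h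
  simp only [O1]
  by_cases hxe : x % 2 = 0 <;> by_cases hze : z % 2 = 0
  · -- x even, z even
    simp only [if_pos hze, if_pos hxe] at hgt
    by_cases h1 : 2 ^ d - 2 ≤ x + z
    · rw [if_pos h1]
      have hK0 : K = 0 := by
        by_contra hc
        have h2 := hKpos.1 (by omega)
        omega
      rw [hK0] at hgt
      have p0 : (2:ℕ) ^ (0:ℕ) = 1 := pow_zero 2
      omega
    · rw [if_neg h1, if_pos (by omega : (x + z) % 2 = 0),
        if_neg (by omega : ¬ x % 2 = 1)]
      have hK1 : 1 ≤ K := hKpos.2 (by omega)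
      have := h2K2 hK1
      omega
  · -- x even, z odd
    simp only [if_neg hze, if_pos hxe] at hgt
    by_cases h1 : 2 ^ d - 2 ≤ x + z
    · rw [if_pos h1]
      have hK0 : K = 0 := by
        by_contra hc
        have h2 := hKpos.1 (by omega)
        omega
      rw [hK0] at hgt
      have p0 : (2:ℕ) ^ (0:ℕ) = 1 := pow_zero 2
      omega
    · rw [if_neg h1, if_neg (by omega : ¬ (x + z) % 2 = 0)]
      have hd2 : 2 ≤ d := by
        by_contra hc
        have hd1 : d = 1 := by omega
        subst hd1
        have : (2:ℕ) ^ 1 = 2 := rfl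
        omega
      have hK1 : 1 ≤ K := hKpos.2 (by omega)
      have hbr := UlamProof.eIdx_bridge d x z hd2 (by omega)
      by_cases hC : x % 2 ^ eIdx d x z + z % 2 ^ eIdx d x z < 2 ^ eIdx d x z - 1
      · rw [if_pos hC]
        have hK2 : 2 ≤ K := htwo.2 ⟨hK1, hbr.1 hC⟩
        have := h2K4 hK2
        omega
      · rw [if_neg hC]
        have hKle : K ≤ 1 := by
          by_contra hc
          exact hC (hbr.2 (htwo.1 (by omega)).2)
        have hKeq : K = 1 := by omega
        rw [hKeq] at hgt
        have p1 : (2:ℕ) ^ (1:ℕ) = 2 := rfl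
        omega
  · -- x odd, z even
    simp only [if_pos hze, if_neg hxe] at hgt
    by_cases h1 : 2 ^ d - 2 ≤ x + z
    · rw [if_pos h1]
      have hK0 : K = 0 := by
        by_contra hc
        have h2 := hKpos.1 (by omega)
        omega
      rw [hK0] at hgt
      have p0 : (2:ℕ) ^ (0:ℕ) = 1 := pow_zero 2
      omega
    · rw [if_neg h1, if_neg (by omega : ¬ (x + z) % 2 = 0)]
      have hd2 : 2 ≤ d := by
        by_contra hc
        have hd1 : d = 1 := by omega
        subst hd1
        have : (2:ℕ) ^ 1 = 2 := rfl
        omega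
      have hK1 : 1 ≤ K := hKpos.2 (by omega)
      have hbr := UlamProof.eIdx_bridge d x z hd2 (by omega)
      by_cases hC : x % 2 ^ eIdx d x z + z % 2 ^ eIdx d x z < 2 ^ eIdx d x z - 1
      · rw [if_pos hC]
        have hK2 : 2 ≤ K := htwo.2 ⟨hK1, hbr.1 hC⟩
        have := h2K4 hK2
        omega
      · rw [if_neg hC]
        have hKle : K ≤ 1 := by
          by_contra hc
          exact hC (hbr.2 (htwo.1 (by omega)).2)
        have hKeq : K = 1 := by omega
        rw [hKeq] at hgt
        have p1 : (2:ℕ) ^ (1:ℕ) = 2 := rfl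
        omega
  · -- x odd, z odd
    simp only [if_neg hze, if_neg hxe] at hgt
    by_cases h1 : 2 ^ d - 2 ≤ x + z
    · rw [if_pos h1]
      omega
    · rw [if_neg h1, if_pos (by omega : (x + z) % 2 = 0),
        if_pos (by omega : x % 2 = 1)]
      omega
end
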